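/- arXiv:1803.05768 — 6 statements merged into one kernel-verified Lean document; each statement's English description precedes it below -/
import Mathlib

section
/- Let F ⊆ C^a be a set of a-tuples over C such that for every tuple t ∈ F there exists a set S ∈ Bad with every coordinate of t belonging to S. Then |F| ≤ (1 − Q) · N^k · k^a. -/
/-- Proposition 1 (worst-case error bound for k-entailment): if every wrongly
entailed `a`-tuple is witnessed inside some "bad" size-`k` subset, then the
number of such tuples is at most `(1 - Q) * N^k * k^a`. -/
theorem stmt_0 {α : Type*} [DecidableEq α] (C : Finset α) (N a k : ℕ)
    (hN : C.card = N) (ha : 0 < a) (hak : a ≤ k) (hkN : k ≤ N)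
    (Bad : Finset (Finset α)) (hBad : Bad ⊆ C.powersetCard k)
    (Q : ℝ) (hQ : Q = 1 - (Bad.card : ℝ) / (N.choose k))
    (F : Finset (Fin a → α))
    (hFC : ∀ t ∈ F, ∀ i, t i ∈ C)
    (hF : ∀ t ∈ F, ∃ S ∈ Bad, ∀ i, t i ∈ S) :
    (F.card : ℝ) ≤ (1 - Q) * (N : ℝ) ^ k * (k : ℝ) ^ a := by
  have hcard : ∀ S ∈ Bad, S.card = k := by
    intro S hS
    exact (Finset.mem_powersetCard.mp (hBad hS)).2
  -- F ⊆ union over Bad of tuples with coords in S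
  have hsub : F ⊆ Bad.biUnion (fun S => Fintype.piFinset fun _ : Fin a => S) := by
    intro t ht
    obtain ⟨S, hS, hts⟩ := hF t ht
    exact Finset.mem_biUnion.mpr ⟨S, hS, Fintype.mem_piFinset.mpr hts⟩
  have h1 : F.card ≤ Bad.card * k ^ a := by
    calc F.card ≤ (Bad.biUnion (fun S => Fintype.piFinset fun _ : Fin a => S)).card :=
          Finset.card_le_card hsub
      _ ≤ ∑ S ∈ Bad, (Fintype.piFinset fun _ : Fin a => S).card :=
          Finset.card_biUnion_le
      _ = ∑ S ∈ Bad, k ^ a := by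
          apply Finset.sum_congr rfl
          intro S hS
          simp [Fintype.card_piFinset, hcard S hS]
      _ = Bad.card * k ^ a := by simp [Finset.sum_const, mul_comm]
  have hchoose_pos : (0 : ℝ) < (N.choose k : ℝ) := by
    exact_mod_cast Nat.choose_pos hkN
  have hchoose_le : (N.choose k : ℝ) ≤ (N : ℝ) ^ k := by
    exact_mod_cast Nat.choose_le_pow N k
  have h1' : (F.card : ℝ) ≤ (Bad.card : ℝ) * (k : ℝ) ^ a := by exact_mod_cast h1
  rw [hQ]
  calc (F.card : ℝ) ≤ (Bad.card : ℝ) * (k : ℝ) ^ a := h1'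
    _ ≤ (Bad.card : ℝ) / (N.choose k) * (N : ℝ) ^ k * (k : ℝ) ^ a := by
        gcongr ?_ * (k : ℝ) ^ a
        rw [div_mul_eq_mul_div, le_div_iff₀ hchoose_pos]
        exact mul_le_mul_of_nonneg_left hchoose_le (by positivity)
    _ = (1 - (1 - (Bad.card : ℝ) / (N.choose k))) * (N : ℝ) ^ k * (k : ℝ) ^ a := by ring
end

section
/- Suppose for each size-k subset S of C we are given a set E(S) ⊆ C^a of a-tuples, each of whose coordinates lies in S, such that E(S) ∩ F = ∅ whenever S ∉ Bad; and suppose every tuple t ∈ F receives at least max{1, γ·N^{k−a}} votes, where the number of votes of t is |{S : |S| = k, t ∈ E(S)}|. If γ·N^{k−a} ≥ 1 then |F| ≤ (1 − Q)·N^a·k^a/γ, and otherwise |F| ≤ (1 − Q)·N^k·k^a. -/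
/-- Proposition 2 (worst-case error bound for voting entailment). -/
theorem stmt_1 {α : Type*} [DecidableEq α] (C : Finset α) (N a k : ℕ)
    (hN : C.card = N) (ha : 0 < a) (hak : a ≤ k) (hkN : k ≤ N)
    (γ : ℝ) (hγ : γ ∈ Set.Icc (0 : ℝ) 1)
    (Bad : Finset (Finset α)) (hBad : Bad ⊆ C.powersetCard k)
    (Q : ℝ) (hQ : Q = 1 - (Bad.card : ℝ) / (N.choose k))
    (F : Finset (Fin a → α))
    (hFC : ∀ t ∈ F, ∀ i, t i ∈ C)
    (E : Finset α → Finset (Fin a → α))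
    (hE : ∀ S ∈ C.powersetCard k, ∀ t ∈ E S, ∀ i, t i ∈ S)
    (hdisj : ∀ S ∈ C.powersetCard k, S ∉ Bad → ∀ t ∈ E S, t ∉ F)
    (hvotes : ∀ t ∈ F,
      max 1 (γ * (N : ℝ) ^ (k - a)) ≤
        (((C.powersetCard k).filter (fun S => t ∈ E S)).card : ℝ)) :
    (1 ≤ γ * (N : ℝ) ^ (k - a) →
        (F.card : ℝ) ≤ (1 - Q) * (N : ℝ) ^ a * (k : ℝ) ^ a / γ) ∧
    (γ * (N : ℝ) ^ (k - a) < 1 →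
        (F.card : ℝ) ≤ (1 - Q) * (N : ℝ) ^ k * (k : ℝ) ^ a) := by
  obtain ⟨hγ0, hγ1⟩ := hγ
  have hN1 : 1 ≤ N := le_trans (le_trans ha hak) hkN
  -- each E S has at most k^a elements
  have hES : ∀ S ∈ C.powersetCard k, (E S).card ≤ k ^ a := by
    intro S hS
    have hScard : S.card = k := (Finset.mem_powersetCard.mp hS).2
    have hsub : E S ⊆ Fintype.piFinset (fun _ : Fin a => S) := by
      intro t ht
      simp only [Fintype.mem_piFinset]
      exact hE S hS t ht
    calc (E S).card ≤ (Fintype.piFinset (fun _ : Fin a => S)).card :=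
          Finset.card_le_card hsub
      _ = k ^ a := by
          rw [Fintype.card_piFinset]
          simp [hScard]
  -- double counting
  have hsum : ∑ t ∈ F, ((C.powersetCard k).filter (fun S => t ∈ E S)).card
      ≤ Bad.card * k ^ a := by
    have h1 : ∀ t ∈ F, ((C.powersetCard k).filter (fun S => t ∈ E S)).card
        ≤ (Bad.filter (fun S => t ∈ E S)).card := by
      intro t ht
      apply Finset.card_le_card
      intro S hS
      rw [Finset.mem_filter] at hS ⊢
      refine ⟨?_, hS.2⟩
      by_contra hSB
      exact hdisj S hS.1 hSB t hS.2 ht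
    calc ∑ t ∈ F, ((C.powersetCard k).filter (fun S => t ∈ E S)).card
        ≤ ∑ t ∈ F, (Bad.filter (fun S => t ∈ E S)).card := Finset.sum_le_sum h1
      _ = ∑ S ∈ Bad, (F.filter (fun t => t ∈ E S)).card := by
          simp_rw [Finset.card_filter]
          exact Finset.sum_comm
      _ ≤ ∑ S ∈ Bad, k ^ a := by
          refine Finset.sum_le_sum fun S hS => ?_
          refine le_trans (Finset.card_le_card ?_) (hES S (hBad hS))
          intro t ht; exact (Finset.mem_filter.mp ht).2
      _ = Bad.card * k ^ a := by
          rw [Finset.sum_const, smul_eq_mul]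
  have hmain : (F.card : ℝ) * max 1 (γ * (N : ℝ) ^ (k - a))
      ≤ (Bad.card : ℝ) * (k : ℝ) ^ a := by
    calc (F.card : ℝ) * max 1 (γ * (N : ℝ) ^ (k - a))
        = ∑ _t ∈ F, max 1 (γ * (N : ℝ) ^ (k - a)) := by
          rw [Finset.sum_const, nsmul_eq_mul]
      _ ≤ ∑ t ∈ F, (((C.powersetCard k).filter (fun S => t ∈ E S)).card : ℝ) :=
          Finset.sum_le_sum hvotes
      _ = ((∑ t ∈ F, ((C.powersetCard k).filter (fun S => t ∈ E S)).card : ℕ) : ℝ) := by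
          push_cast; ring
      _ ≤ ((Bad.card * k ^ a : ℕ) : ℝ) := by exact_mod_cast hsum
      _ = (Bad.card : ℝ) * (k : ℝ) ^ a := by push_cast; ring
  have hc1 : (1 : ℝ) ≤ (N.choose k : ℝ) := by
    exact_mod_cast Nat.succ_le_of_lt (Nat.choose_pos hkN)
  have hcpos : (0 : ℝ) < (N.choose k : ℝ) := lt_of_lt_of_le one_pos hc1
  have hck : (N.choose k : ℝ) ≤ (N : ℝ) ^ k := by
    exact_mod_cast Nat.choose_le_pow N k
  have hpk : (N : ℝ) ^ (k - a) * (N : ℝ) ^ a = (N : ℝ) ^ k := by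
    rw [← pow_add]; congr 1; omega
  have hF0 : (0 : ℝ) ≤ (F.card : ℝ) := Nat.cast_nonneg _
  have hB0 : (0 : ℝ) ≤ (Bad.card : ℝ) := Nat.cast_nonneg _
  have hka0 : (0 : ℝ) ≤ (k : ℝ) ^ a := by positivity
  have hNa0 : (0 : ℝ) ≤ (N : ℝ) ^ a := by positivity
  constructor
  · intro h1
    have hγpos : 0 < γ := by
      rcases lt_or_ge 0 γ with h | h
      · exact h
      · exfalso
        have hp0 : (0 : ℝ) ≤ (N : ℝ) ^ (k - a) := by positivity
        nlinarith
    have hmain' : (F.card : ℝ) * (γ * (N : ℝ) ^ (k - a))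
        ≤ (Bad.card : ℝ) * (k : ℝ) ^ a := by
      rwa [max_eq_right h1] at hmain
    rw [hQ]
    have : (1 : ℝ) - (1 - (Bad.card : ℝ) / (N.choose k)) = (Bad.card : ℝ) / (N.choose k) := by
      ring
    rw [this, le_div_iff₀ hγpos, div_mul_eq_mul_div, div_mul_eq_mul_div, le_div_iff₀ hcpos]
    -- F * γ * c ≤ B * N^a * k^a
    have step : (F.card : ℝ) * γ * (N : ℝ) ^ k ≤ (Bad.card : ℝ) * (N : ℝ) ^ a * (k : ℝ) ^ a := by
      calc (F.card : ℝ) * γ * (N : ℝ) ^ k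
          = (F.card : ℝ) * (γ * (N : ℝ) ^ (k - a)) * (N : ℝ) ^ a := by
            rw [← hpk]; ring
        _ ≤ (Bad.card : ℝ) * (k : ℝ) ^ a * (N : ℝ) ^ a :=
            mul_le_mul_of_nonneg_right hmain' hNa0
        _ = (Bad.card : ℝ) * (N : ℝ) ^ a * (k : ℝ) ^ a := by ring
    have hFγ : (0 : ℝ) ≤ (F.card : ℝ) * γ := by positivity
    nlinarith [mul_le_mul_of_nonneg_left hck hFγ]
  · intro h2
    have hmain' : (F.card : ℝ) ≤ (Bad.card : ℝ) * (k : ℝ) ^ a := by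
      rw [max_eq_left h2.le, mul_one] at hmain
      exact hmain
    rw [hQ]
    have : (1 : ℝ) - (1 - (Bad.card : ℝ) / (N.choose k)) = (Bad.card : ℝ) / (N.choose k) := by
      ring
    rw [this, div_mul_eq_mul_div, div_mul_eq_mul_div, le_div_iff₀ hcpos]
    nlinarith [mul_le_mul_of_nonneg_left hck (mul_nonneg hB0 hka0)]
end

section
/- If A(f) ≥ ε for some ε ∈ (0,1], then P[Â(f,Υ) = 0] ≤ exp(−⌊n/k⌋ · ε). -/
/-!
Call a set free if it contains no `k`-set on which `f = 1`, and let `ε' = A(f)` be the density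
of those witness `k`-sets. For any `U ⊆ C`, a uniformly random `k`-subset `S` of `C \ U` makes
`U ∪ S` non-free with probability at least `ε'`: give a witness `W` with `j = |W \ U|` the weight
`C(M, j) / C(k, j)`, where `M = |C \ U|`. Summed over the `S` with `W ⊆ U ∪ S` this weight is
exactly `C(M, k)`, while by Vandermonde's identity the total weight of the `k`-subsets of any
`U ∪ S` is at most `C(|C|, k)`. Growing a random `n`-set by `⌊n/k⌋` successive blocks of `k`
elements, each block destroys freeness with conditional probability at least `ε'`, so a random
`n`-set is free with probability at most `(1 - ε')^⌊n/k⌋ ≤ exp (-⌊n/k⌋ ε)`; and `Â(f, Υ) = 0`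
says precisely that `Υ` is free.
-/

/-- The fraction of elements of the finite sample space `Ω` satisfying `p`,
i.e. the probability of `p` under the uniform distribution on `Ω`. -/
noncomputable def prFrac {α : Type*} (Ω : Finset α) (p : α → Prop) : ℝ :=
  ((@Finset.filter α p (Classical.decPred p) Ω).card : ℝ) / (Ω.card : ℝ)

/-- The average of `f` over all size-`k` subsets of `T`. -/
noncomputable def avgk {α : Type*} (k : ℕ) (f : Finset α → ℝ) (T : Finset α) : ℝ :=
  (∑ S ∈ T.powersetCard k, f S) / (T.card.choose k : ℝ)

open Finset

namespace FreeSubsets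

variable {α : Type*}

def IsFree (B : Finset (Finset α)) (T : Finset α) : Prop := ∀ W ∈ B, ¬ W ⊆ T

theorem IsFree.mono {B : Finset (Finset α)} {T T' : Finset α} (h : IsFree B T) (hT : T' ⊆ T) :
    IsFree B T' :=
  fun W hW hWT => h W hW (hWT.trans hT)

theorem card_div_choose_le_one {B : Finset (Finset α)} {C : Finset α} {k : ℕ}
    (hB : B ⊆ C.powersetCard k) : (#B : ℝ) / (#C).choose k ≤ 1 :=
  div_le_one_of_le₀ (by exact_mod_cast (card_le_card hB).trans_eq (card_powersetCard _ _))
    (by positivity)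

section

variable [DecidableEq α]

instance (B : Finset (Finset α)) : DecidablePred (IsFree B) :=
  fun T => inferInstanceAs (Decidable (∀ W ∈ B, ¬ W ⊆ T))

def freeExtensions (B : Finset (Finset α)) (C U : Finset α) (j : ℕ) : Finset (Finset α) :=
  {T ∈ (C \ U).powersetCard j | IsFree B (U ∪ T)}

theorem card_filter_powersetCard_sdiff_card_eq_le (U S : Finset α) (k j : ℕ) :
    #{W ∈ (U ∪ S).powersetCard k | #(W \ U) = j} ≤ (#S).choose j * (#U).choose (k - j) := by
  rw [← card_powersetCard, ← card_powersetCard, ← card_product]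
  refine card_le_card_of_injOn (fun W => (W \ U, W ∩ U)) (fun W hW => ?_) fun W₁ _ W₂ _ h => ?_
  · simp only [mem_coe, mem_filter, mem_powersetCard] at hW
    obtain ⟨⟨hWUS, hWk⟩, hWj⟩ := hW
    have := card_sdiff_add_card_inter W U
    simp only [mem_coe, mem_product, mem_powersetCard]
    exact ⟨⟨sdiff_le_iff.2 hWUS, hWj⟩, inter_subset_right, by omega⟩
  · simp only [Prod.mk.injEq] at h
    rw [← sdiff_union_inter W₁ U, ← sdiff_union_inter W₂ U, h.1, h.2]

theorem sum_powersetCard_union_choose_div_choose_le (U : Finset α) {S : Finset α} {k : ℕ}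
    (hS : #S = k) (M : ℕ) :
    ∑ W ∈ (U ∪ S).powersetCard k, (M.choose #(W \ U) : ℝ) / k.choose #(W \ U)
      ≤ (M + #U).choose k := by
  have hmaps : ∀ W ∈ (U ∪ S).powersetCard k, #(W \ U) ∈ range (k + 1) := fun W hW =>
    mem_range_succ_iff.2 ((card_le_card sdiff_subset).trans (mem_powersetCard.1 hW).2.le)
  rw [← sum_fiberwise_of_maps_to hmaps]
  calc _ ≤ ∑ j ∈ range (k + 1),
          ((k.choose j * (#U).choose (k - j) : ℕ) : ℝ) * (M.choose j / k.choose j) := by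
        gcongr with j hj
        rw [sum_congr rfl fun W hW => by rw [(mem_filter.1 hW).2], sum_const, nsmul_eq_mul]
        gcongr
        exact_mod_cast hS ▸ card_filter_powersetCard_sdiff_card_eq_le U S k j
    _ = ∑ j ∈ range (k + 1), ((M.choose j * (#U).choose (k - j) : ℕ) : ℝ) := by
        refine sum_congr rfl fun j hj => ?_
        have : (k.choose j : ℝ) ≠ 0 := by
          exact_mod_cast (Nat.choose_pos (mem_range_succ_iff.1 hj)).ne'
        push_cast
        field_simp
    _ = (M + #U).choose k := by
        rw [Nat.add_choose_eq, Nat.sum_antidiagonal_eq_sum_range_succ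
          (fun a b => M.choose a * (#U).choose b)]
        push_cast
        rfl

theorem card_filter_subset_union_mul_choose_div_choose {C U W : Finset α} {k : ℕ}
    (hW : W ⊆ C) (hWk : #W = k) :
    (#{S ∈ (C \ U).powersetCard k | W ⊆ U ∪ S} : ℝ)
        * ((#(C \ U)).choose #(W \ U) / k.choose #(W \ U))
      = (#(C \ U)).choose k := by
  have hjk : #(W \ U) ≤ k := hWk ▸ card_le_card sdiff_subset
  have hcount : {S ∈ (C \ U).powersetCard k | W ⊆ U ∪ S}
      = {S ∈ (C \ U).powersetCard k | W \ U ⊆ S} :=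
    filter_congr fun S _ => sdiff_le_iff.symm
  have hkj : (k.choose #(W \ U) : ℝ) ≠ 0 := by exact_mod_cast (Nat.choose_pos hjk).ne'
  rw [hcount, card_filter_powersetCard_subset _ _ _ (sdiff_subset_sdiff hW le_rfl) hjk,
    mul_div_assoc', div_eq_iff hkj, mul_comm]
  exact_mod_cast (Nat.choose_mul hjk).symm

theorem card_mul_choose_le_choose_mul_card_not_isFree {B : Finset (Finset α)} {C U : Finset α}
    {k : ℕ} (hB : B ⊆ C.powersetCard k) (hU : U ⊆ C) :
    (#B : ℝ) * (#(C \ U)).choose k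
      ≤ (#C).choose k * #{S ∈ (C \ U).powersetCard k | ¬ IsFree B (U ∪ S)} := by
  set M := #(C \ U)
  set bad := {S ∈ (C \ U).powersetCard k | ¬ IsFree B (U ∪ S)}
  set w : Finset α → ℝ := fun W => (M.choose #(W \ U) : ℝ) / k.choose #(W \ U)
  have hw : ∀ W ∈ B, #{S ∈ bad | W ⊆ U ∪ S} * w W = M.choose k := fun W hW => by
    have hbad : {S ∈ bad | W ⊆ U ∪ S} = {S ∈ (C \ U).powersetCard k | W ⊆ U ∪ S} := by
      rw [filter_filter]
      exact filter_congr fun S _ => and_iff_right_of_imp fun hWS hfree => hfree W hW hWS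
    obtain ⟨hWC, hWk⟩ := mem_powersetCard.1 (hB hW)
    rw [hbad]
    exact card_filter_subset_union_mul_choose_div_choose hWC hWk
  have hNM : #C = M + #U := (card_sdiff_add_card_eq_card hU).symm
  calc (#B : ℝ) * M.choose k = ∑ W ∈ B, ∑ S ∈ bad, if W ⊆ U ∪ S then w W else 0 := by
        rw [← nsmul_eq_mul, ← sum_const]
        refine sum_congr rfl fun W hW => ?_
        rw [← sum_filter, sum_const, nsmul_eq_mul, hw W hW]
    _ = ∑ S ∈ bad, ∑ W ∈ B with W ⊆ U ∪ S, w W := by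
        rw [sum_comm]
        simp_rw [sum_filter]
    _ ≤ ∑ S ∈ bad, ∑ W ∈ (U ∪ S).powersetCard k, w W := by
        refine sum_le_sum fun S _ => sum_le_sum_of_subset_of_nonneg (fun W hW => ?_) ?_
        · obtain ⟨hWB, hWS⟩ := mem_filter.1 hW
          exact mem_powersetCard.2 ⟨hWS, (mem_powersetCard.1 (hB hWB)).2⟩
        · intros
          positivity
    _ ≤ ∑ _S ∈ bad, ((#C).choose k : ℝ) := by
        refine sum_le_sum fun S hS => ?_
        rw [hNM]
        exact sum_powersetCard_union_choose_div_choose_le U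
          (mem_powersetCard.1 (mem_filter.1 hS).1).2 M
    _ = (#C).choose k * #bad := by rw [sum_const, nsmul_eq_mul, mul_comm]

theorem card_freeExtensions_le_one_sub_mul {B : Finset (Finset α)} {C U : Finset α} {k : ℕ}
    (hB : B ⊆ C.powersetCard k) (hU : U ⊆ C) :
    (#(freeExtensions B C U k) : ℝ) ≤ (1 - #B / (#C).choose k) * (#(C \ U)).choose k := by
  set bad := {S ∈ (C \ U).powersetCard k | ¬ IsFree B (U ∪ S)}
  have hsplit : (#(freeExtensions B C U k) : ℝ) + #bad = (#(C \ U)).choose k := by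
    rw [freeExtensions]
    exact_mod_cast (card_filter_add_card_filter_not _).trans (card_powersetCard _ _)
  rcases Nat.eq_zero_or_pos ((#C).choose k) with h0 | hpos
  · rw [h0, Nat.cast_zero, div_zero, sub_zero, one_mul, ← hsplit, le_add_iff_nonneg_right]
    positivity
  · have hbad : (#B : ℝ) / (#C).choose k * (#(C \ U)).choose k ≤ #bad := by
      rw [div_mul_eq_mul_div, div_le_iff₀ (by positivity), mul_comm (#bad : ℝ)]
      exact card_mul_choose_le_choose_mul_card_not_isFree hB hU
    linarith

theorem card_freeExtensions_mul_choose (B : Finset (Finset α)) (C U : Finset α) (j k : ℕ) :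
    #(freeExtensions B C U j) * j.choose k
      = ∑ S ∈ freeExtensions B C U k, #{T ∈ freeExtensions B C U j | S ⊆ T} := by
  calc _ = ∑ T ∈ freeExtensions B C U j, #{S ∈ freeExtensions B C U k | S ⊆ T} := by
        rw [card_eq_sum_ones, sum_mul, one_mul]
        refine sum_congr rfl fun T hT => ?_
        simp only [freeExtensions, mem_filter, mem_powersetCard] at hT
        obtain ⟨⟨hTC, hTj⟩, hfree⟩ := hT
        have hsub : {S ∈ freeExtensions B C U k | S ⊆ T} = T.powersetCard k := by
          ext S
          simp only [freeExtensions, mem_filter, mem_powersetCard]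
          constructor
          · rintro ⟨⟨⟨-, hSk⟩, -⟩, hST⟩
            exact ⟨hST, hSk⟩
          · rintro ⟨hST, hSk⟩
            exact ⟨⟨⟨hST.trans hTC, hSk⟩, hfree.mono (union_subset_union_right hST)⟩, hST⟩
        rw [hsub, card_powersetCard, hTj]
    _ = _ := by
        simp only [card_filter]
        exact sum_comm

theorem card_filter_superset_le_card_freeExtensions {B : Finset (Finset α)} {C U S : Finset α}
    {j : ℕ} :
    #{T ∈ freeExtensions B C U j | S ⊆ T} ≤ #(freeExtensions B C (U ∪ S) (j - #S)) := by
  refine card_le_card_of_injOn (· \ S) (fun T hT => ?_) fun T₁ hT₁ T₂ hT₂ h => ?_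
  · simp only [freeExtensions, mem_coe, mem_filter, mem_powersetCard] at hT ⊢
    obtain ⟨⟨⟨hTC, hTj⟩, hfree⟩, hST⟩ := hT
    refine ⟨⟨?_, ?_⟩, ?_⟩
    · rw [sdiff_union_distrib, ← Finset.sdiff_sdiff_left']
      exact sdiff_subset_sdiff hTC le_rfl
    · rw [card_sdiff_of_subset hST, hTj]
    · rwa [union_assoc, union_sdiff_of_subset hST]
  · simp only [mem_coe, mem_filter] at hT₁ hT₂
    rw [← union_sdiff_of_subset hT₁.2, ← union_sdiff_of_subset hT₂.2]
    exact congrArg (S ∪ ·) h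

theorem card_freeExtensions_le {B : Finset (Finset α)} {C : Finset α} {k : ℕ} (hk : 0 < k)
    (hB : B ⊆ C.powersetCard k) (j : ℕ) {U : Finset α} (hU : U ⊆ C) :
    (#(freeExtensions B C U j) : ℝ)
      ≤ (1 - #B / (#C).choose k) ^ (j / k) * (#(C \ U)).choose j := by
  induction j using Nat.strong_induction_on generalizing U with
  | _ j ih =>
  set ε : ℝ := #B / (#C).choose k
  set M := #(C \ U)
  rcases lt_or_ge j k with hjk | hkj
  · rw [Nat.div_eq_of_lt hjk, pow_zero, one_mul, ← card_powersetCard]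
    exact_mod_cast card_filter_le _ _
  have hε : ε ≤ 1 := card_div_choose_le_one hB
  have hext : ∀ S ∈ freeExtensions B C U k, (#{T ∈ freeExtensions B C U j | S ⊆ T} : ℝ)
      ≤ (1 - ε) ^ ((j - k) / k) * (M - k).choose (j - k) := by
    intro S hS
    obtain ⟨hSC, hSk⟩ := mem_powersetCard.1 (mem_filter.1 hS).1
    have hM : #(C \ (U ∪ S)) = M - k := by
      rw [sdiff_union_distrib, ← Finset.sdiff_sdiff_left', card_sdiff_of_subset hSC, hSk]
    calc _ ≤ (#(freeExtensions B C (U ∪ S) (j - k)) : ℝ) := by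
          exact_mod_cast hSk ▸ card_filter_superset_le_card_freeExtensions (S := S)
      _ ≤ _ := hM ▸ ih (j - k) (by omega) (union_subset hU (hSC.trans sdiff_subset))
  have hchoose : (M.choose j : ℝ) * j.choose k = M.choose k * (M - k).choose (j - k) := by
    exact_mod_cast Nat.choose_mul hkj
  have hchain : (#(freeExtensions B C U j) : ℝ) * j.choose k
      ≤ (1 - ε) ^ (j / k) * M.choose j * j.choose k := by
    calc (#(freeExtensions B C U j) : ℝ) * j.choose k
        = ∑ S ∈ freeExtensions B C U k, (#{T ∈ freeExtensions B C U j | S ⊆ T} : ℝ) := by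
          exact_mod_cast card_freeExtensions_mul_choose B C U j k
      _ ≤ #(freeExtensions B C U k) * ((1 - ε) ^ ((j - k) / k) * (M - k).choose (j - k)) := by
          rw [← nsmul_eq_mul]
          exact sum_le_card_nsmul _ _ _ hext
      _ ≤ (1 - ε) * M.choose k * ((1 - ε) ^ ((j - k) / k) * (M - k).choose (j - k)) := by
          have : 0 ≤ 1 - ε := sub_nonneg.2 hε
          gcongr
          exact card_freeExtensions_le_one_sub_mul hB hU
      _ = (1 - ε) ^ (j / k) * M.choose j * j.choose k := by
          rw [Nat.div_eq_sub_div hk hkj, pow_succ]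
          linear_combination (-(1 - ε) ^ ((j - k) / k) * (1 - ε)) * hchoose
  exact le_of_mul_le_mul_right hchain (by exact_mod_cast Nat.choose_pos hkj)

end

theorem avgk_eq_card_div {f : Finset α → ℝ} (hf : ∀ S, f S = 0 ∨ f S = 1) (k : ℕ)
    (C : Finset α) : avgk k f C = #{W ∈ C.powersetCard k | f W ≠ 0} / (#C).choose k := by
  rw [avgk, natCast_card_filter]
  congr 1
  refine sum_congr rfl fun W _ => ?_
  rcases hf W with h | h <;> simp [h]

theorem isFree_of_avgk_eq_zero {f : Finset α → ℝ} (hf : ∀ S, 0 ≤ f S) {k : ℕ} {T : Finset α}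
    (hkT : k ≤ #T) (h : avgk k f T = 0) (C : Finset α) :
    IsFree {W ∈ C.powersetCard k | f W ≠ 0} T := by
  have hchoose : ((#T).choose k : ℝ) ≠ 0 := by exact_mod_cast (Nat.choose_pos hkT).ne'
  rw [avgk, div_eq_zero_iff, or_iff_left hchoose,
    sum_eq_zero_iff_of_nonneg fun S _ => hf S] at h
  intro W hW hWT
  obtain ⟨hWC, hWf⟩ := mem_filter.1 hW
  exact hWf (h W (mem_powersetCard.2 ⟨hWT, (mem_powersetCard.1 hWC).2⟩))

theorem one_sub_pow_le_exp_neg_mul {ε ε' : ℝ} (hε : ε ≤ ε') (hε' : ε' ≤ 1) (m : ℕ) :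
    (1 - ε') ^ m ≤ Real.exp (-(m * ε)) :=
  calc (1 - ε') ^ m ≤ Real.exp (-ε') ^ m :=
        pow_le_pow_left₀ (by linarith) (by linarith [Real.add_one_le_exp (-ε')]) m
    _ ≤ Real.exp (-ε) ^ m := by gcongr
    _ = Real.exp (-(m * ε)) := by rw [← Real.exp_nat_mul]; ring_nf

end FreeSubsets

open FreeSubsets in
theorem stmt_5_general {α : Type*} (C : Finset α) (k n : ℕ)
    (hk : 1 ≤ k) (hkn : k ≤ n)
    (f : Finset α → ℝ) (hf : ∀ S, f S = 0 ∨ f S = 1)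
    (ε : ℝ) (hA : avgk k f C ≥ ε) :
    prFrac (C.powersetCard n) (fun T => avgk k f T = 0)
      ≤ Real.exp (-(((n / k : ℕ) : ℝ) * ε)) := by
  classical
  set B := {W ∈ C.powersetCard k | f W ≠ 0}
  have hB : B ⊆ C.powersetCard k := filter_subset _ _
  have hf0 : ∀ S, 0 ≤ f S := fun S => by rcases hf S with h | h <;> simp [h]
  have hevent : ∀ T ∈ C.powersetCard n, avgk k f T = 0 → T ∈ freeExtensions B C ∅ n :=
    fun T hT h0 => by
      obtain ⟨hTC, hTn⟩ := mem_powersetCard.1 hT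
      simpa [freeExtensions, hTC, hTn] using isFree_of_avgk_eq_zero hf0 (hTn ▸ hkn) h0 C
  rw [prFrac, card_powersetCard]
  refine div_le_of_le_mul₀ (by positivity) (by positivity) ?_
  calc _ ≤ (#(freeExtensions B C ∅ n) : ℝ) := by
        exact_mod_cast card_le_card fun T hT => hevent T (mem_filter.1 hT).1 (mem_filter.1 hT).2
    _ ≤ (1 - #B / (#C).choose k) ^ (n / k) * (#C).choose n := by
        simpa using card_freeExtensions_le hk hB n (empty_subset C)
    _ ≤ Real.exp (-(((n / k : ℕ) : ℝ) * ε)) * (#C).choose n := by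
        gcongr
        exact one_sub_pow_le_exp_neg_mul (avgk_eq_card_div hf k C ▸ hA)
          (card_div_choose_le_one hB) _

/-- Theorem 3 (concentration inequality for the realizable case): if
`A(f) ≥ ε`, then the probability that a uniformly random size-`n` subset `Υ`
of `C` has empirical average `Â(f,Υ) = 0` is at most `exp(-⌊n/k⌋·ε)`. -/
theorem stmt_5 {α : Type*} (C : Finset α) (N k n : ℕ)
    (hN : C.card = N) (hk : 1 ≤ k) (hkn : k ≤ n) (hnN : n ≤ N)
    (f : Finset α → ℝ) (hf : ∀ S, f S = 0 ∨ f S = 1)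
    (ε : ℝ) (hε : ε ∈ Set.Ioc (0 : ℝ) 1) (hA : avgk k f C ≥ ε) :
    prFrac (C.powersetCard n) (fun T => avgk k f T = 0)
      ≤ Real.exp (-(((n / k : ℕ) : ℝ) * ε)) :=
  stmt_5_general C k n hk hkn f hf ε hA
end

section
/- Let T = (1/q)·(T₁ + ⋯ + T_q), where for each i, Tᵢ = (1/m₁)·(Xᵢ₁ + ⋯ + Xᵢ_{m₁}) − (1/m₂)·(Yᵢ₁ + ⋯ + Yᵢ_{m₂}) with the family (Xᵢ₁, …, Xᵢ_{m₁}, Yᵢ₁, …, Yᵢ_{m₂}) consisting of independent real random variables, each with zero mean and each almost surely contained in an interval of length at most 1 (the random variables Tᵢ for different i are allowed to be arbitrarily dependent on each other). Then for every ε > 0, P[T ≥ ε] ≤ exp(−2ε² / (1/m₁ + 1/m₂)). -/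
/-! Each block is a weighted sum of independent centred variables with values in intervals of
length at most `1`, so by Hoeffding's lemma and independence it has a sub-Gaussian moment
generating function with variance proxy `(1/m₁ + 1/m₂)/4`. A common variance proxy survives convex
combinations of arbitrarily dependent variables: by convexity of `exp`, the mgf of a convex
combination is at most the same combination of the mgfs (Hoeffding's convexity trick). So `T` has
the same proxy, and the Chernoff bound gives the tail estimate. -/

open MeasureTheory ProbabilityTheory Real
open scoped NNReal

namespace ProbabilityTheory.HasSubgaussianMGF

variable {Ω ι : Type*} {mΩ : MeasurableSpace Ω} {μ : Measure Ω} {X : Ω → ℝ} {c c' : ℝ≥0}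

lemma mono (h : HasSubgaussianMGF X c μ) (hc : c ≤ c') : HasSubgaussianMGF X c' μ where
  integrable_exp_mul := h.integrable_exp_mul
  mgf_le t := (h.mgf_le t).trans (by gcongr)

lemma sum_mul_of_sum_eq_one {X : ι → Ω → ℝ} {s : Finset ι} {w : ι → ℝ}
    (hw₀ : ∀ i ∈ s, 0 ≤ w i) (hw₁ : ∑ i ∈ s, w i = 1) (h : ∀ i ∈ s, HasSubgaussianMGF (X i) c μ) :
    HasSubgaussianMGF (fun ω ↦ ∑ i ∈ s, w i * X i ω) c μ := by
  have hjensen (t : ℝ) (ω : Ω) :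
      exp (t * ∑ i ∈ s, w i * X i ω) ≤ ∑ i ∈ s, w i * exp (t * X i ω) := by
    have hconv := convexOn_exp.map_sum_le hw₀ hw₁ (fun i _ ↦ Set.mem_univ (t * X i ω))
    simp only [smul_eq_mul] at hconv
    rw [Finset.mul_sum]
    simpa only [mul_left_comm t] using hconv
  have hint (t : ℝ) : Integrable (fun ω ↦ ∑ i ∈ s, w i * exp (t * X i ω)) μ :=
    integrable_finsetSum _ fun i hi ↦ ((h i hi).integrable_exp_mul t).const_mul _
  have hmeas : AEStronglyMeasurable (fun ω ↦ ∑ i ∈ s, w i * X i ω) μ :=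
    Finset.aestronglyMeasurable_fun_sum _ fun i hi ↦ (h i hi).aestronglyMeasurable.const_mul _
  have hint_exp (t : ℝ) : Integrable (fun ω ↦ exp (t * ∑ i ∈ s, w i * X i ω)) μ :=
    (hint t).mono' (hmeas.const_mul t).aemeasurable.exp.aestronglyMeasurable
      (ae_of_all _ fun ω ↦ by simpa [abs_of_pos (exp_pos _)] using hjensen t ω)
  refine ⟨hint_exp, fun t ↦ ?_⟩
  calc mgf (fun ω ↦ ∑ i ∈ s, w i * X i ω) μ t
      ≤ ∫ ω, ∑ i ∈ s, w i * exp (t * X i ω) ∂μ :=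
        integral_mono (hint_exp t) (hint t) (hjensen t)
    _ = ∑ i ∈ s, w i * mgf (X i) μ t := by
        rw [integral_finsetSum _ fun i hi ↦ ((h i hi).integrable_exp_mul t).const_mul _]
        simp only [integral_const_mul, mgf]
    _ ≤ ∑ i ∈ s, w i * exp (c * t ^ 2 / 2) :=
        Finset.sum_le_sum fun i hi ↦ mul_le_mul_of_nonneg_left ((h i hi).mgf_le t) (hw₀ i hi)
    _ = exp (c * t ^ 2 / 2) := by rw [← Finset.sum_mul, hw₁, one_mul]

end ProbabilityTheory.HasSubgaussianMGF

namespace ProbabilityTheory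

variable {Ω ι : Type*} {mΩ : MeasurableSpace Ω} {μ : Measure Ω} [IsProbabilityMeasure μ]

lemma hasSubgaussianMGF_of_mem_Icc_of_integral_eq_zero_of_sub_le {X : Ω → ℝ} {a b : ℝ}
    {L : ℝ≥0} (hm : AEMeasurable X μ) (hb : ∀ᵐ ω ∂μ, X ω ∈ Set.Icc a b) (hc : μ[X] = 0)
    (hL : b - a ≤ L) : HasSubgaussianMGF X (L ^ 2 / 4) μ := by
  refine (hasSubgaussianMGF_of_mem_Icc_of_integral_eq_zero hm hb hc).mono ?_
  obtain ⟨ω, hω⟩ := hb.exists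
  have hab : 0 ≤ b - a := by linarith [hω.1, hω.2]
  rw [← NNReal.coe_le_coe]
  push_cast
  rw [Real.norm_of_nonneg hab]
  nlinarith

lemma hasSubgaussianMGF_sum_mul_of_iIndepFun [Fintype ι] {Z : ι → Ω → ℝ} {a b : ι → ℝ}
    {L : ι → ℝ≥0} (hindep : iIndepFun Z μ) (hm : ∀ k, AEMeasurable (Z k) μ)
    (hb : ∀ k, ∀ᵐ ω ∂μ, Z k ω ∈ Set.Icc (a k) (b k)) (hlen : ∀ k, b k - a k ≤ L k)
    (hc : ∀ k, μ[Z k] = 0) (w : ι → ℝ) :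
    HasSubgaussianMGF (fun ω ↦ ∑ k, w k * Z k ω) ((∑ k, (‖w k‖₊ * L k) ^ 2) / 4) μ := by
  have hZ (k : ι) : HasSubgaussianMGF (fun ω ↦ w k * Z k ω) ((‖w k‖₊ * L k) ^ 2 / 4) μ := by
    have hscaled := (hasSubgaussianMGF_of_mem_Icc_of_integral_eq_zero_of_sub_le
      (hm k) (hb k) (hc k) (hlen k)).const_mul (w k)
    convert hscaled using 1
    ext
    change (‖w k‖ * L k) ^ 2 / 4 = w k ^ 2 * ((L k : ℝ) ^ 2 / 4)
    rw [Real.norm_eq_abs, mul_pow, sq_abs]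
    ring
  rw [Finset.sum_div]
  exact HasSubgaussianMGF.sum_of_iIndepFun
    (hindep.comp (fun k x ↦ w k * x) fun k ↦ measurable_const_mul (w k)) fun k _ ↦ hZ k

end ProbabilityTheory

theorem stmt_11_general {Ω : Type*} [MeasurableSpace Ω] (P : Measure Ω)
    [IsProbabilityMeasure P] (q m₁ m₂ : ℕ) (hq : 0 < q)
    (X : Fin q → Fin m₁ → Ω → ℝ) (Y : Fin q → Fin m₂ → Ω → ℝ)
    (aX bX : Fin q → Fin m₁ → ℝ) (aY bY : Fin q → Fin m₂ → ℝ)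
    (hmeasX : ∀ i j, Measurable (X i j)) (hmeasY : ∀ i j, Measurable (Y i j))
    (hindep : ∀ i, iIndepFun
      (Sum.elim (X i) (Y i)) P)
    (hmeanX : ∀ i j, ∫ ω, X i j ω ∂P = 0)
    (hmeanY : ∀ i j, ∫ ω, Y i j ω ∂P = 0)
    (hbddX : ∀ i j, ∀ᵐ ω ∂P, aX i j ≤ X i j ω ∧ X i j ω ≤ bX i j)
    (hbddY : ∀ i j, ∀ᵐ ω ∂P, aY i j ≤ Y i j ω ∧ Y i j ω ≤ bY i j)
    (hlenX : ∀ i j, bX i j - aX i j ≤ 1)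
    (hlenY : ∀ i j, bY i j - aY i j ≤ 1)
    (ε : ℝ) (hε : 0 < ε) :
    P {ω | ε ≤ (1 / (q : ℝ)) * ∑ i,
        ((1 / (m₁ : ℝ)) * ∑ j, X i j ω - (1 / (m₂ : ℝ)) * ∑ j, Y i j ω)}
      ≤ ENNReal.ofReal
          (Real.exp (-2 * ε ^ 2 / (1 / (m₁ : ℝ) + 1 / (m₂ : ℝ)))) := by
  set w : Fin m₁ ⊕ Fin m₂ → ℝ := Sum.elim (fun _ ↦ 1 / (m₁ : ℝ)) (fun _ ↦ -(1 / (m₂ : ℝ)))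
  set v : ℝ≥0 := ((m₁ : ℝ≥0)⁻¹ + (m₂ : ℝ≥0)⁻¹) / 4
  have hblock (i : Fin q) : HasSubgaussianMGF
      (fun ω ↦ (1 / (m₁ : ℝ)) * ∑ j, X i j ω - (1 / (m₂ : ℝ)) * ∑ j, Y i j ω) v P := by
    have hsum := hasSubgaussianMGF_sum_mul_of_iIndepFun
      (a := Sum.elim (aX i) (aY i)) (b := Sum.elim (bX i) (bY i)) (L := fun _ ↦ 1) (hindep i)
      (Sum.forall.2 ⟨fun j ↦ (hmeasX i j).aemeasurable, fun j ↦ (hmeasY i j).aemeasurable⟩)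
      (Sum.forall.2 ⟨hbddX i, hbddY i⟩) (Sum.forall.2 ⟨hlenX i, hlenY i⟩)
      (Sum.forall.2 ⟨hmeanX i, hmeanY i⟩) w
    convert hsum using 1
    · ext ω
      simp [w, Fintype.sum_sum_type, Finset.mul_sum, sub_eq_add_neg]
    · ext
      simp [v, w, Fintype.sum_sum_type, field]
  have hT := HasSubgaussianMGF.sum_mul_of_sum_eq_one (s := Finset.univ) (w := fun _ ↦ 1 / (q : ℝ))
    (fun _ _ ↦ by positivity) (by simp [field]) fun i _ ↦ hblock i
  have htail := hT.measure_ge_le hε.le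
  rw [measureReal_def, ← ENNReal.le_ofReal_iff_toReal_le (measure_ne_top _ _) (exp_nonneg _)]
    at htail
  convert htail using 3
  · simp only [Finset.mul_sum]
  · simp only [v]
    push_cast
    field_simp
    ring

/-- Two-block Hoeffding-type inequality: `T = (1/q)·(T₁ + ⋯ + T_q)` where each
block `Tᵢ = (1/m₁)·(Xᵢ₁ + ⋯ + Xᵢ_{m₁}) − (1/m₂)·(Yᵢ₁ + ⋯ + Yᵢ_{m₂})`, the
family `(Xᵢ₁, …, Xᵢ_{m₁}, Yᵢ₁, …, Yᵢ_{m₂})` (indexed by `Fin m₁ ⊕ Fin m₂`)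
consisting of independent, zero-mean random variables, each almost surely
contained in an interval of length at most 1; the blocks may be arbitrarily
dependent on each other.  Then `P[T ≥ ε] ≤ exp(-2ε²/(1/m₁ + 1/m₂))`. -/
theorem stmt_11 {Ω : Type*} [MeasurableSpace Ω] (P : Measure Ω)
    [IsProbabilityMeasure P] (q m₁ m₂ : ℕ) (hq : 0 < q) (hm₁ : 0 < m₁)
    (hm₂ : 0 < m₂)
    (X : Fin q → Fin m₁ → Ω → ℝ) (Y : Fin q → Fin m₂ → Ω → ℝ)
    (aX bX : Fin q → Fin m₁ → ℝ) (aY bY : Fin q → Fin m₂ → ℝ)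
    (hmeasX : ∀ i j, Measurable (X i j)) (hmeasY : ∀ i j, Measurable (Y i j))
    (hindep : ∀ i, iIndepFun
      (Sum.elim (X i) (Y i)) P)
    (hmeanX : ∀ i j, ∫ ω, X i j ω ∂P = 0)
    (hmeanY : ∀ i j, ∫ ω, Y i j ω ∂P = 0)
    (hbddX : ∀ i j, ∀ᵐ ω ∂P, aX i j ≤ X i j ω ∧ X i j ω ≤ bX i j)
    (hbddY : ∀ i j, ∀ᵐ ω ∂P, aY i j ≤ Y i j ω ∧ Y i j ω ≤ bY i j)
    (hlenX : ∀ i j, bX i j - aX i j ≤ 1)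
    (hlenY : ∀ i j, bY i j - aY i j ≤ 1)
    (ε : ℝ) (hε : 0 < ε) :
    P {ω | ε ≤ (1 / (q : ℝ)) * ∑ i,
        ((1 / (m₁ : ℝ)) * ∑ j, X i j ω - (1 / (m₂ : ℝ)) * ∑ j, Y i j ω)}
      ≤ ENNReal.ofReal
          (Real.exp (-2 * ε ^ 2 / (1 / (m₁ : ℝ) + 1 / (m₂ : ℝ)))) :=
  stmt_11_general P q m₁ m₂ hq X Y aX bX aY bY hmeasX hmeasY hindep hmeanX hmeanY hbddX hbddY hlenX
    hlenY ε hε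
end

section
/- For every ε > 0, P[∃ Φ ∈ H : Â(f_Φ,Υ) − A(f_Φ) ≥ ε] ≤ |H|·exp(−2⌊n/k⌋ε²); consequently, for every δ ∈ (0,1), P[∃ Φ ∈ H : Â(f_Φ,Υ) ≥ A(f_Φ) + √(ln(|H|/δ)/(2⌊n/k⌋))] ≤ δ. -/
/-!
Hoeffding's argument for U-statistics, adapted to sampling without replacement. With
`m = ⌊n/k⌋`, give an `m`-tuple `y` of `k`-subsets of the sample `Υ` the weight one over the number
of `n`-subsets of `C` containing `⋃ j, y j`. This weight depends only on `#(⋃ j, y j)`, so under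
it every coordinate `y j` is uniform on the `k`-subsets of `Υ` and the total weight is the same
for every sample; summed over all samples, the weights become the uniform weight on `m`-tuples of
`k`-subsets of `C`, i.e. `m` independent draws. Jensen's inequality therefore bounds the average
over `Υ` of `exp (m s Â(Υ))` by the `m`-th power of the moment generating function of one draw,
which Hoeffding's lemma controls. Chernoff's bound with `s = 4ε` and a union bound over `H` give
the first claim; the second is the first with `ε` chosen so that `|H| exp (-2mε²) = δ`.
-/

open Real Finset
open Fintype (piFinset)

theorem Finset.sum_piFinset_const_insertNth {β M : Type*} [AddCommMonoid M] {r : ℕ}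
    (T : Finset β) (p : Fin (r + 1)) (F : (Fin (r + 1) → β) → M) :
    ∑ y ∈ piFinset fun _ => T, F y
      = ∑ S ∈ T, ∑ z ∈ piFinset fun _ : Fin r => T, F (p.insertNth S z) := by
  have h := filter_piFinset_eq_map_insertNthEquiv (p := p) (fun _ => T) fun _ => True
  simp only [filter_true] at h
  rw [h, sum_map, sum_product]
  rfl

section Hoeffding

open MeasureTheory ProbabilityTheory
open scoped ENNReal

theorem Finset.sum_exp_mul_div_card_le {ι : Type*} (T : Finset ι) (hT : T.Nonempty) (x : ι → ℝ)
    (hx : ∀ i ∈ T, x i ∈ Set.Icc (0 : ℝ) 1) (t : ℝ) :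
    (∑ i ∈ T, exp (t * x i)) / #T ≤ exp (t * ((∑ i ∈ T, x i) / #T) + t ^ 2 / 8) := by
  set μ : Measure ℝ := (#T : ℝ≥0∞)⁻¹ • ∑ i ∈ T, Measure.dirac (x i)
  have hcard : (#T : ℝ≥0∞) ≠ 0 := by simpa using hT.ne_empty
  have hint (φ : ℝ → ℝ) : ∫ y, φ y ∂μ = (∑ i ∈ T, φ (x i)) / #T := by
    rw [integral_smul_measure, integral_finsetSum_measure fun i _ => integrable_dirac enorm_lt_top]
    simp [div_eq_inv_mul]
  have : IsProbabilityMeasure μ := ⟨by simp [μ, ENNReal.inv_mul_cancel hcard]⟩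
  have hsupp : ∀ᵐ y ∂μ, y ∈ Set.Icc (0 : ℝ) 1 :=
    Measure.ae_smul_measure (ae_finsetSum_measure_iff.2 fun i hi =>
      (ae_dirac_iff measurableSet_Icc).2 (hx i hi)) _
  have h := (hasSubgaussianMGF_of_mem_Icc aemeasurable_id hsupp).mgf_le t
  simp only [mgf, id, hint] at h
  set a := (∑ i ∈ T, x i) / #T
  have hsplit : ∑ i ∈ T, exp (t * (x i - a)) = (∑ i ∈ T, exp (t * x i)) * exp (-(t * a)) := by
    rw [sum_mul]
    exact sum_congr rfl fun i _ => by rw [← exp_add]; ring_nf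
  rw [hsplit, mul_div_right_comm, ← le_div_iff₀ (exp_pos _), ← exp_sub] at h
  refine h.trans_eq (congrArg exp ?_)
  norm_num
  ring

end Hoeffding

theorem avgk_exp_mul_le {α : Type*} (C : Finset α) {k : ℕ} (hk : k ≤ #C) {g : Finset α → ℝ}
    (hg : ∀ S, g S ∈ Set.Icc (0 : ℝ) 1) (s : ℝ) :
    avgk k (fun S => exp (s * g S)) C ≤ exp (s * avgk k g C + s ^ 2 / 8) := by
  simpa [avgk, card_powersetCard] using
    (C.powersetCard k).sum_exp_mul_div_card_le (powersetCard_nonempty.2 hk) g (fun S _ => hg S) s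

section Sampling

variable {α : Type*} [DecidableEq α]

theorem Finset.biUnion_insertNth {r : ℕ} (p : Fin (r + 1)) (S : Finset α) (z : Fin r → Finset α) :
    univ.biUnion (p.insertNth S z) = S ∪ univ.biUnion z := by
  ext a
  simp [Fin.exists_iff_succAbove p]

theorem Finset.card_filter_card_sdiff_powersetCard {U W : Finset α} (hW : W ⊆ U) {k i : ℕ}
    (hik : i ≤ k) :
    #{S ∈ U.powersetCard k | #(S \ W) = i} = (#U - #W).choose i * (#W).choose (k - i) := by
  rw [← card_sdiff_of_subset hW, ← card_powersetCard, ← card_powersetCard, ← card_product]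
  refine card_bij' (fun S _ => (S \ W, S ∩ W)) (fun z _ => z.1 ∪ z.2) ?_ ?_ ?_ ?_
  · intro S hS
    simp only [mem_filter, mem_powersetCard] at hS
    obtain ⟨⟨hSU, hScard⟩, hSi⟩ := hS
    have := card_sdiff_add_card_inter S W
    simp only [mem_product, mem_powersetCard]
    exact ⟨⟨sdiff_subset_sdiff hSU le_rfl, hSi⟩, inter_subset_right, by omega⟩
  · rintro ⟨A, B⟩ hz
    simp only [mem_product, mem_powersetCard] at hz
    obtain ⟨⟨hAU, hA⟩, hBW, hB⟩ := hz
    have hdisj : Disjoint A W := sdiff_disjoint.mono_left hAU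
    simp only [mem_filter, mem_powersetCard]
    refine ⟨⟨union_subset (hAU.trans sdiff_subset) (hBW.trans hW), ?_⟩, ?_⟩
    · rw [card_union_of_disjoint (hdisj.mono_right hBW), hA, hB]
      omega
    · rw [union_sdiff_distrib, sdiff_eq_self_of_disjoint hdisj, sdiff_eq_empty_iff_subset.2 hBW,
        union_empty, hA]
  · intro S _
    exact sdiff_union_inter S W
  · rintro ⟨A, B⟩ hz
    simp only [mem_product, mem_powersetCard] at hz
    obtain ⟨⟨hAU, -⟩, hBW, -⟩ := hz
    have hdisj : Disjoint A W := sdiff_disjoint.mono_left hAU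
    simp only [Prod.mk.injEq]
    constructor
    · rw [union_sdiff_distrib, sdiff_eq_self_of_disjoint hdisj, sdiff_eq_empty_iff_subset.2 hBW,
        union_empty]
    · rw [union_inter_distrib_right, disjoint_iff_inter_eq_empty.1 hdisj, empty_union,
        inter_eq_left.2 hBW]

-- The value of the sum in `sum_piFinset_card_union_biUnion`; the recursion groups the first set
-- `S` of a tuple by `#(S \ W)`.
noncomputable def unionCardSum (c : ℕ → ℝ) (k u : ℕ) : ℕ → ℕ → ℝ
  | 0, w => c w
  | r + 1, w => ∑ i ∈ range (k + 1),
      (((u - w).choose i * w.choose (k - i) : ℕ) : ℝ) * unionCardSum c k u r (w + i)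

theorem sum_piFinset_card_union_biUnion (c : ℕ → ℝ) (k : ℕ) (U : Finset α) (r : ℕ) :
    ∀ W ⊆ U, ∑ y ∈ piFinset fun _ : Fin r => U.powersetCard k, c #(W ∪ univ.biUnion y)
      = unionCardSum c k #U r #W := by
  induction r with
  | zero => intro W _; simp [unionCardSum]
  | succ r ih =>
    intro W hWU
    have hS : ∀ S ∈ U.powersetCard k,
        ∑ z ∈ piFinset fun _ : Fin r => U.powersetCard k,
            c #(W ∪ univ.biUnion ((0 : Fin (r + 1)).insertNth S z))
          = unionCardSum c k #U r (#W + #(S \ W)) := by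
      intro S hS
      simp_rw [biUnion_insertNth, ← union_assoc]
      rw [ih _ (union_subset hWU (mem_powersetCard.1 hS).1),
        ← card_union_of_disjoint disjoint_sdiff, union_sdiff_self_eq_union]
    have hmaps : ∀ S ∈ U.powersetCard k, #(S \ W) ∈ range (k + 1) := fun S hS =>
      mem_range_succ_iff.2 ((card_le_card sdiff_subset).trans (mem_powersetCard.1 hS).2.le)
    rw [sum_piFinset_const_insertNth _ 0, sum_congr rfl hS,
      ← sum_fiberwise_of_maps_to hmaps, unionCardSum]
    refine sum_congr rfl fun i hi => ?_
    rw [sum_congr rfl fun S hS => by rw [(mem_filter.1 hS).2], sum_const, nsmul_eq_mul,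
      card_filter_card_sdiff_powersetCard hWU (mem_range_succ_iff.1 hi)]

theorem sum_piFinset_mul_apply_eq_mul_avgk (c : ℕ → ℝ) (k : ℕ) (U : Finset α) {m : ℕ}
    (j : Fin m) (G : Finset α → ℝ) :
    ∑ y ∈ piFinset fun _ : Fin m => U.powersetCard k, c #(univ.biUnion y) * G (y j)
      = (∑ y ∈ piFinset fun _ : Fin m => U.powersetCard k, c #(univ.biUnion y)) * avgk k G U := by
  obtain ⟨r, rfl⟩ : ∃ r, m = r + 1 := Nat.exists_eq_add_one_of_ne_zero (Fin.pos j).ne'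
  have hmarginal : ∀ G : Finset α → ℝ,
      ∑ y ∈ piFinset fun _ : Fin (r + 1) => U.powersetCard k, c #(univ.biUnion y) * G (y j)
        = unionCardSum c k #U r k * ∑ S ∈ U.powersetCard k, G S := by
    intro G
    rw [sum_piFinset_const_insertNth _ j, mul_sum]
    refine sum_congr rfl fun S hS => ?_
    simp_rw [Fin.insertNth_apply_same, biUnion_insertNth, ← sum_mul]
    rw [sum_piFinset_card_union_biUnion c k U r S (mem_powersetCard.1 hS).1,
      (mem_powersetCard.1 hS).2, mul_comm]
  have htotal := hmarginal fun _ => 1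
  simp only [mul_one, sum_const, card_powersetCard, nsmul_one] at htotal
  rw [hmarginal, htotal, avgk, mul_assoc, mul_div_cancel_of_imp']
  intro h
  rw [← card_powersetCard, Nat.cast_eq_zero, card_eq_zero] at h
  simp [h]

theorem card_biUnion_le_of_mem_piFinset {S : Finset α} {k m : ℕ} {y : Fin m → Finset α}
    (hy : y ∈ piFinset fun _ => S.powersetCard k) : #(univ.biUnion y) ≤ m * k := by
  simp only [Fintype.mem_piFinset, mem_powersetCard] at hy
  calc #(univ.biUnion y) ≤ ∑ j, #(y j) := card_biUnion_le
    _ = m * k := by simp [hy]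

theorem piFinset_powersetCard_eq_filter {U C : Finset α} (hUC : U ⊆ C) (k m : ℕ) :
    (piFinset fun _ : Fin m => U.powersetCard k)
      = {y ∈ piFinset fun _ : Fin m => C.powersetCard k | univ.biUnion y ⊆ U} := by
  ext y
  simp only [Fintype.mem_piFinset, mem_filter, mem_powersetCard, biUnion_subset, mem_univ,
    true_implies]
  exact ⟨fun h => ⟨fun j => ⟨(h j).1.trans hUC, (h j).2⟩, fun j => (h j).1⟩,
    fun h j => ⟨h.2 j, (h.1 j).2⟩⟩

-- `(#C - u).choose (n - u)` is the number of `n`-subsets of `C` containing the `u`-set `⋃ j, y j`.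
theorem sum_powersetCard_sum_piFinset (C : Finset α) {k n m : ℕ} (hmk : m * k ≤ n)
    (hn : n ≤ #C) (G : (Fin m → Finset α) → ℝ) :
    ∑ U ∈ C.powersetCard n, ∑ y ∈ piFinset fun _ : Fin m => U.powersetCard k,
        (((#C - #(univ.biUnion y)).choose (n - #(univ.biUnion y)) : ℕ) : ℝ)⁻¹ * G y
      = ∑ y ∈ piFinset fun _ : Fin m => C.powersetCard k, G y := by
  rw [sum_congr rfl fun U hU => by
    rw [piFinset_powersetCard_eq_filter (mem_powersetCard.1 hU).1, sum_filter], sum_comm]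
  refine sum_congr rfl fun y hy => ?_
  have hWC : univ.biUnion y ⊆ C := biUnion_subset.2 fun j _ =>
    (mem_powersetCard.1 (Fintype.mem_piFinset.1 hy j)).1
  have hWn := (card_biUnion_le_of_mem_piFinset hy).trans hmk
  rw [← sum_filter, sum_const, nsmul_eq_mul, card_filter_powersetCard_subset _ _ _ hWC hWn,
    mul_inv_cancel_left₀]
  exact Nat.cast_ne_zero.2 (Nat.choose_pos (by omega)).ne'

theorem exp_mul_avgk_le (c : ℕ → ℝ) (hc : ∀ u, 0 ≤ c u) (U : Finset α) (k m : ℕ)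
    (hZ : 0 < ∑ y ∈ piFinset fun _ : Fin m => U.powersetCard k, c #(univ.biUnion y))
    (g : Finset α → ℝ) (s : ℝ) :
    exp (m * s * avgk k g U)
      ≤ (∑ y ∈ piFinset fun _ : Fin m => U.powersetCard k, c #(univ.biUnion y))⁻¹
        * ∑ y ∈ piFinset fun _ : Fin m => U.powersetCard k,
            c #(univ.biUnion y) * exp (s * ∑ j, g (y j)) := by
  set Y := piFinset fun _ : Fin m => U.powersetCard k
  set Z := ∑ y ∈ Y, c #(univ.biUnion y)
  have hmean : ∑ y ∈ Y, (c #(univ.biUnion y) / Z) • (s * ∑ j, g (y j)) = m * s * avgk k g U := by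
    simp_rw [smul_eq_mul, mul_sum]
    rw [sum_comm]
    have hj : ∀ j : Fin m, ∑ y ∈ Y, c #(univ.biUnion y) / Z * (s * g (y j)) = s * avgk k g U := by
      intro j
      calc ∑ y ∈ Y, c #(univ.biUnion y) / Z * (s * g (y j))
          = s / Z * ∑ y ∈ Y, c #(univ.biUnion y) * g (y j) := by
            rw [mul_sum]; exact sum_congr rfl fun y _ => by ring
        _ = s * avgk k g U := by
            rw [sum_piFinset_mul_apply_eq_mul_avgk, ← mul_assoc, div_mul_cancel₀ _ hZ.ne']
    simp [hj, mul_assoc]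
  have hweights : ∑ y ∈ Y, c #(univ.biUnion y) / Z = 1 := by rw [← sum_div, div_self hZ.ne']
  have hjensen := convexOn_exp.map_sum_le (t := Y) (p := fun y => s * ∑ j, g (y j))
    (fun y _ => div_nonneg (hc _) hZ.le) hweights fun _ _ => Set.mem_univ _
  rw [hmean] at hjensen
  refine hjensen.trans_eq ?_
  simp_rw [smul_eq_mul, mul_sum, div_eq_inv_mul, mul_assoc]

theorem sum_exp_mul_avgk_le (C : Finset α) {k n m : ℕ} (hkn : k ≤ n) (hmk : m * k ≤ n)
    (hn : n ≤ #C) (g : Finset α → ℝ) (s : ℝ) :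
    ∑ U ∈ C.powersetCard n, exp (m * s * avgk k g U)
      ≤ #(C.powersetCard n) * avgk k (fun S => exp (s * g S)) C ^ m := by
  set c : ℕ → ℝ := fun u => (((#C - u).choose (n - u) : ℕ) : ℝ)⁻¹
  set Φ := unionCardSum c k n m 0
  have hZ : ∀ U ∈ C.powersetCard n,
      ∑ y ∈ piFinset fun _ : Fin m => U.powersetCard k, c #(univ.biUnion y) = Φ := by
    intro U hU
    simpa [(mem_powersetCard.1 hU).2] using
      sum_piFinset_card_union_biUnion c k U m ∅ (empty_subset U)
  have hmass : #(C.powersetCard n) * Φ = ((#C).choose k : ℝ) ^ m := by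
    have h := sum_powersetCard_sum_piFinset C hmk hn fun _ => 1
    simp only [mul_one] at h
    rw [sum_congr rfl hZ, sum_const, nsmul_eq_mul] at h
    rw [h, sum_const, Fintype.card_piFinset_const, card_powersetCard]
    simp
  have hK : (0 : ℝ) < (#C).choose k := Nat.cast_pos.2 (Nat.choose_pos (hkn.trans hn))
  have hΦ : 0 < Φ := pos_of_mul_pos_right (hmass ▸ pow_pos hK m) (Nat.cast_nonneg _)
  calc ∑ U ∈ C.powersetCard n, exp (m * s * avgk k g U)
      ≤ ∑ U ∈ C.powersetCard n, Φ⁻¹ * ∑ y ∈ piFinset fun _ : Fin m => U.powersetCard k,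
          c #(univ.biUnion y) * exp (s * ∑ j, g (y j)) := by
        refine sum_le_sum fun U hU => ?_
        rw [← hZ U hU]
        exact exp_mul_avgk_le c (fun _ => inv_nonneg.2 (Nat.cast_nonneg _)) U k m
          (hZ U hU ▸ hΦ) g s
    _ = Φ⁻¹ * ∑ y ∈ piFinset fun _ : Fin m => C.powersetCard k, ∏ j, exp (s * g (y j)) := by
        rw [← mul_sum, sum_powersetCard_sum_piFinset C hmk hn]
        simp_rw [mul_sum, exp_sum]
    _ = #(C.powersetCard n) * avgk k (fun S => exp (s * g S)) C ^ m := by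
        rw [sum_prod_piFinset (C.powersetCard k) fun _ S => exp (s * g S), prod_const,
          card_univ, Fintype.card_fin, avgk, div_pow, ← hmass]
        field_simp

theorem prFrac_avgk_sub_ge_le (C : Finset α) {k n m : ℕ}
    (hkn : k ≤ n) (hmk : m * k ≤ n) (hn : n ≤ #C) {g : Finset α → ℝ}
    (hg : ∀ S, g S ∈ Set.Icc (0 : ℝ) 1) {ε : ℝ} (hε : 0 ≤ ε) :
    prFrac (C.powersetCard n) (fun U => avgk k g U - avgk k g C ≥ ε)
      ≤ exp (-2 * m * ε ^ 2) := by
  have hΩ : (0 : ℝ) < #(C.powersetCard n) := by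
    rw [card_powersetCard]; exact Nat.cast_pos.2 (Nat.choose_pos hn)
  rw [prFrac, div_le_iff₀ hΩ, mul_comm]
  set A := avgk k g C
  set s := 4 * ε
  have hms : 0 ≤ m * s := by positivity
  calc (#{U ∈ C.powersetCard n | avgk k g U - A ≥ ε} : ℝ)
      ≤ ∑ U ∈ C.powersetCard n, exp (m * s * (avgk k g U - (A + ε))) := by
        rw [card_filter, Nat.cast_sum]
        refine sum_le_sum fun U _ => ?_
        split_ifs with h
        · exact_mod_cast one_le_exp (mul_nonneg hms (by linarith))
        · simp [(exp_pos _).le]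
    _ = exp (-(m * s * (A + ε))) * ∑ U ∈ C.powersetCard n, exp (m * s * avgk k g U) := by
        rw [mul_sum]
        exact sum_congr rfl fun U _ => by rw [← exp_add]; ring_nf
    _ ≤ exp (-(m * s * (A + ε))) * (#(C.powersetCard n) * exp (s * A + s ^ 2 / 8) ^ m) := by
        gcongr
        refine (sum_exp_mul_avgk_le C hkn hmk hn g s).trans ?_
        gcongr
        · exact div_nonneg (sum_nonneg fun _ _ => (exp_pos _).le) (Nat.cast_nonneg _)
        · exact avgk_exp_mul_le C (hkn.trans hn) hg s
    _ = #(C.powersetCard n) * exp (-2 * m * ε ^ 2) := by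
        rw [← exp_nat_mul, mul_left_comm, ← exp_add]
        congr 2
        ring

end Sampling

theorem prFrac_exists_le_sum {γ ι : Type*} (Ω : Finset γ) (H : Finset ι) (p : ι → γ → Prop) :
    prFrac Ω (fun x => ∃ i ∈ H, p i x) ≤ ∑ i ∈ H, prFrac Ω (p i) := by
  classical
  simp only [prFrac, ← sum_div]
  gcongr
  rw [← Nat.cast_sum, Nat.cast_le]
  refine (card_le_card fun x hx => ?_).trans card_biUnion_le
  simp only [mem_filter, mem_biUnion] at hx ⊢
  obtain ⟨hxΩ, i, hi, hpx⟩ := hx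
  exact ⟨i, hi, hxΩ, hpx⟩

/-- Uniform-over-class one-sample concentration bound:
`P[∃ Φ ∈ H, Â(f_Φ,Υ) − A(f_Φ) ≥ ε] ≤ |H|·exp(−2⌊n/k⌋ε²)`, and consequently
`P[∃ Φ ∈ H, Â(f_Φ,Υ) ≥ A(f_Φ) + √(ln(|H|/δ)/(2⌊n/k⌋))] ≤ δ`. -/
theorem stmt_12 {α β : Type*} (C : Finset α) (N k n : ℕ)
    (hN : C.card = N) (hk : 1 ≤ k) (hkn : k ≤ n) (hnN : n ≤ N)
    (H : Finset β) (hH : H.Nonempty)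
    (f : β → Finset α → ℝ) (hf : ∀ Φ S, f Φ S = 0 ∨ f Φ S = 1) :
    (∀ ε : ℝ, 0 < ε →
      prFrac (C.powersetCard n)
          (fun Υ => ∃ Φ ∈ H, avgk k (f Φ) Υ - avgk k (f Φ) C ≥ ε)
        ≤ (H.card : ℝ) * Real.exp (-2 * ((n / k : ℕ) : ℝ) * ε ^ 2)) ∧
    (∀ δ : ℝ, δ ∈ Set.Ioo (0 : ℝ) 1 →
      prFrac (C.powersetCard n)
          (fun Υ => ∃ Φ ∈ H, avgk k (f Φ) Υ ≥ avgk k (f Φ) C +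
            Real.sqrt (Real.log ((H.card : ℝ) / δ) / (2 * ((n / k : ℕ) : ℝ))))
        ≤ δ) := by
  classical
  have hf01 : ∀ Φ S, f Φ S ∈ Set.Icc (0 : ℝ) 1 := fun Φ S => by
    rcases hf Φ S with h | h <;> simp [h]
  have hbound : ∀ ε : ℝ, 0 ≤ ε →
      prFrac (C.powersetCard n) (fun Υ => ∃ Φ ∈ H, avgk k (f Φ) Υ - avgk k (f Φ) C ≥ ε)
        ≤ H.card * exp (-2 * ((n / k : ℕ) : ℝ) * ε ^ 2) := fun ε hε =>
    (prFrac_exists_le_sum _ H _).trans <| by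
      simpa using sum_le_sum fun Φ _ =>
        prFrac_avgk_sub_ge_le C hkn (Nat.div_mul_le_self n k) (hN ▸ hnN) (hf01 Φ) hε
  refine ⟨fun ε hε => hbound ε hε.le, fun δ ⟨hδ0, hδ1⟩ => ?_⟩
  have hm : (0 : ℝ) < (n / k : ℕ) := Nat.cast_pos.2 (Nat.div_pos hkn hk)
  have hL : 0 < log (H.card / δ) :=
    log_pos ((one_lt_div hδ0).2 (hδ1.trans_le (Nat.one_le_cast.2 hH.card_pos)))
  have hsq : sqrt (log (H.card / δ) / (2 * ((n / k : ℕ) : ℝ))) ^ 2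
      = log (H.card / δ) / (2 * ((n / k : ℕ) : ℝ)) := sq_sqrt (by positivity)
  simp_rw [ge_iff_le, ← le_sub_iff_add_le'] at hbound ⊢
  refine (hbound _ (sqrt_nonneg _)).trans_eq ?_
  rw [hsq, show -2 * ((n / k : ℕ) : ℝ) * (log (H.card / δ) / (2 * ((n / k : ℕ) : ℝ)))
    = -log (H.card / δ) by field_simp, exp_neg, exp_log (by positivity)]
  field_simp
end

section
/- For every ε ∈ (0,1], the probability that some Φ ∈ H has empirical probability Â(f_Φ,Υ) = 1 while its true probability satisfies A(f_Φ) ≤ 1 − ε is at most |H|·exp(−⌊n/k⌋·ε), i.e. P[∃ Φ ∈ H such that A(f_Φ) ≤ 1 − ε and Â(f_Φ,Υ) = 1] ≤ |H|·exp(−⌊n/k⌋·ε). -/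
open Finset
set_option linter.unusedSectionVars false

section Aux
variable {α : Type*} [DecidableEq α]

/-- `NB k P T`: every `k`-subset of `T` satisfies `P` ("no bad `k`-subset"). -/
def NB (k : ℕ) (P : Finset α → Prop) (T : Finset α) : Prop :=
  ∀ S ∈ T.powersetCard k, P S

instance NB.dec (k : ℕ) (P : Finset α → Prop) [DecidablePred P] :
    DecidablePred (NB (α := α) k P) := fun T =>
  inferInstanceAs (Decidable (∀ S ∈ T.powersetCard k, P S))

lemma NB_anti {k : ℕ} {P : Finset α → Prop} {S T : Finset α} (h : S ⊆ T) (hT : NB k P T) :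
    NB k P S := fun A hA => hT A (powersetCard_mono h hA)

/-- number of `j`-subsets of `s` containing a fixed `B ⊆ s`. -/
lemma card_filter_superset (s B : Finset α) (hB : B ⊆ s) {j : ℕ} (hj : B.card ≤ j) :
    ((s.powersetCard j).filter (fun W => B ⊆ W)).card
      = (s.card - B.card).choose (j - B.card) := by
  rw [← card_sdiff_of_subset hB, ← Finset.card_powersetCard (j - B.card) (s \ B)]
  apply Finset.card_nbij' (fun W => W \ B) (fun V => V ∪ B)
  · intro W hW
    simp only [mem_coe, mem_filter, mem_powersetCard] at hW
    obtain ⟨⟨hWs, hWc⟩, hBW⟩ := hW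
    simp only [mem_coe, mem_powersetCard]
    exact ⟨sdiff_subset_sdiff hWs Subset.rfl, by rw [card_sdiff_of_subset hBW, hWc]⟩
  · intro V hV
    simp only [mem_coe, mem_powersetCard] at hV
    obtain ⟨hVs, hVc⟩ := hV
    have hd : Disjoint V B := disjoint_of_subset_left hVs sdiff_disjoint
    simp only [mem_coe, mem_filter, mem_powersetCard]
    refine ⟨⟨union_subset (hVs.trans sdiff_subset) hB, ?_⟩, subset_union_right⟩
    rw [card_union_of_disjoint hd, hVc]
    omega
  · intro W hW
    simp only [mem_coe, mem_filter, mem_powersetCard] at hW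
    exact sdiff_union_of_subset hW.2
  · intro V hV
    simp only [mem_coe, mem_powersetCard] at hV
    have hd : Disjoint V B := disjoint_of_subset_left hV.1 sdiff_disjoint
    show (V ∪ B) \ B = V
    rw [union_sdiff_distrib, sdiff_eq_self_of_disjoint hd, sdiff_self]
    simp

lemma card_filter_inter (u v : Finset α) (h : Disjoint u v) {k j : ℕ} (hj : j ≤ k) :
    (((u ∪ v).powersetCard k).filter (fun A => (A ∩ v).card = j)).card
      = u.card.choose (k - j) * v.card.choose j := by
  rw [← Finset.card_powersetCard (k - j) u, ← Finset.card_powersetCard j v, ← card_product]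
  apply Finset.card_nbij' (fun A => (A \ v, A ∩ v)) (fun p => p.1 ∪ p.2)
  · intro A hA
    simp only [mem_coe, mem_filter, mem_powersetCard] at hA
    obtain ⟨⟨hAs, hAc⟩, hAj⟩ := hA
    have h1 : A \ v ⊆ u := fun x hx => by
      rcases mem_union.mp (hAs (mem_sdiff.mp hx).1) with h | h
      · exact h
      · exact absurd h (mem_sdiff.mp hx).2
    have h2 := card_sdiff_add_card_inter A v
    simp only [mem_coe, mem_product, mem_powersetCard]
    exact ⟨⟨h1, by omega⟩, ⟨inter_subset_right, hAj⟩⟩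
  · intro p hp
    simp only [mem_coe, mem_product, mem_powersetCard] at hp
    obtain ⟨⟨h1s, h1c⟩, h2s, h2c⟩ := hp
    have hd : Disjoint p.1 p.2 := h.mono h1s h2s
    simp only [mem_coe, mem_filter, mem_powersetCard]
    have hcard : (p.1 ∪ p.2).card = k := by
      rw [card_union_of_disjoint hd]; omega
    refine ⟨⟨union_subset (h1s.trans subset_union_left) (h2s.trans subset_union_right), hcard⟩, ?_⟩
    rw [union_inter_distrib_right, (inter_eq_left).mpr h2s,
      disjoint_iff_inter_eq_empty.mp (h.mono h1s Subset.rfl), empty_union, h2c]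
  · intro A hA
    exact sdiff_union_inter A v
  · intro p hp
    simp only [mem_coe, mem_product, mem_powersetCard] at hp
    obtain ⟨⟨h1s, h1c⟩, h2s, h2c⟩ := hp
    have hd1 : Disjoint p.1 v := h.mono h1s Subset.rfl
    ext1 <;> simp only
    · rw [union_sdiff_distrib, sdiff_eq_self_of_disjoint hd1,
        sdiff_eq_empty_iff_subset.mpr h2s, union_empty]
    · rw [union_inter_distrib_right, (inter_eq_left).mpr h2s,
        disjoint_iff_inter_eq_empty.mp hd1, empty_union]

lemma sum_powersetCard_split (u v : Finset α) (h : Disjoint u v) (k : ℕ) (F : ℕ → ℕ) :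
    ∑ A ∈ (u ∪ v).powersetCard k, F (A ∩ v).card
      = ∑ j ∈ Finset.range (k + 1), u.card.choose (k - j) * v.card.choose j * F j := by
  rw [← Finset.sum_fiberwise_of_maps_to (g := fun A => (A ∩ v).card)
      (t := Finset.range (k + 1)) ?hmap]
  case hmap =>
    intro A hA
    simp only [mem_powersetCard] at hA
    have : (A ∩ v).card ≤ A.card := card_le_card inter_subset_left
    simp only [Finset.mem_range]; omega
  refine Finset.sum_congr rfl fun j hj => ?_
  simp only [Finset.mem_range] at hj
  have hjk : j ≤ k := by omega
  calc ∑ A ∈ ((u ∪ v).powersetCard k).filter (fun A => (A ∩ v).card = j), F (A ∩ v).card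
      = ∑ A ∈ ((u ∪ v).powersetCard k).filter (fun A => (A ∩ v).card = j), F j := by
        refine Finset.sum_congr rfl fun A hA => ?_
        rw [(mem_filter.mp hA).2]
    _ = _ := by
        rw [Finset.sum_const, card_filter_inter u v h hjk, smul_eq_mul]

variable (k : ℕ) (P : Finset α → Prop) [DecidablePred P]

/-- Core coupling step. -/
lemma step_lemma (C R : Finset α) (hR : R ⊆ C) (hq : R.card + k ≤ C.card) :
    (((C \ R).powersetCard k).filter (fun W => NB k P (R ∪ W))).card
        * (C.powersetCard k).card
      ≤ ((C.powersetCard k).filter P).card * ((C \ R).powersetCard k).card := by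
  set s := C \ R with hs_def
  have hsc : s.card = C.card - R.card := card_sdiff_of_subset hR
  set M := C.card - R.card with hM
  have hkM : k ≤ M := by omega
  set d : ℕ → ℕ := fun t => M.descFactorial t * (k - t).factorial with hd
  set ν : Finset α → Finset α → ℕ :=
    fun A W => if A \ R ⊆ W then d (A \ R).card else 0 with hν
  set D := M.descFactorial k with hD
  have subRW : ∀ A ∈ C.powersetCard k, ∀ W, A \ R ⊆ W → A ⊆ R ∪ W := by
    intro A hA W hsub x hx
    by_cases hxR : x ∈ R
    · exact mem_union_left _ hxR
    · exact mem_union_right _ (hsub (mem_sdiff.mpr ⟨hx, hxR⟩))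
  have row : ∀ A ∈ C.powersetCard k, ∑ W ∈ s.powersetCard k, ν A W = D := by
    intro A hA
    obtain ⟨hAs, hAc⟩ := mem_powersetCard.mp hA
    have hARs : A \ R ⊆ s := sdiff_subset_sdiff hAs Subset.rfl
    have ht : (A \ R).card ≤ k := hAc ▸ card_le_card sdiff_subset
    have e0 : ∑ W ∈ s.powersetCard k, ν A W
        = ∑ W ∈ (s.powersetCard k).filter (fun W => A \ R ⊆ W), d (A \ R).card := by
      rw [Finset.sum_filter]
    rw [e0, Finset.sum_const, smul_eq_mul, card_filter_superset s (A \ R) hARs ht, hsc]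
    simp only [hd, hD]
    have h1 : (M - (A \ R).card).choose (k - (A \ R).card) * (k - (A \ R).card).factorial
        = (M - (A \ R).card).descFactorial (k - (A \ R).card) := by
      rw [Nat.descFactorial_eq_factorial_mul_choose]; ring
    calc (M - (A \ R).card).choose (k - (A \ R).card)
          * (M.descFactorial (A \ R).card * (k - (A \ R).card).factorial)
        = ((M - (A \ R).card).choose (k - (A \ R).card) * (k - (A \ R).card).factorial)
            * M.descFactorial (A \ R).card := by ring
      _ = (M - (A \ R).card).descFactorial (k - (A \ R).card)
            * M.descFactorial (A \ R).card := by rw [h1]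
      _ = D := Nat.descFactorial_mul_descFactorial ht
  set V := ∑ j ∈ Finset.range (k + 1), R.card.choose (k - j) * k.choose j * d j with hV
  have col : ∀ W ∈ s.powersetCard k, ∑ A ∈ C.powersetCard k, ν A W = V := by
    intro W hW
    obtain ⟨hWs, hWc⟩ := mem_powersetCard.mp hW
    have hWC : W ⊆ C := hWs.trans sdiff_subset
    have hdisj : Disjoint R W :=
      disjoint_left.mpr (fun x hxR hxW => (mem_sdiff.mp (hWs hxW)).2 hxR)
    have hRWC : R ∪ W ⊆ C := union_subset hR hWC
    have e1 : ∑ A ∈ C.powersetCard k, ν A W = ∑ A ∈ (R ∪ W).powersetCard k, ν A W := by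
      symm
      apply Finset.sum_subset (powersetCard_mono hRWC)
      intro A hA hA'
      rw [hν]
      simp only
      rw [if_neg]
      intro hsub
      exact hA' (mem_powersetCard.mpr ⟨subRW A hA W hsub, (mem_powersetCard.mp hA).2⟩)
    have e2 : ∀ A ∈ (R ∪ W).powersetCard k, ν A W = d (A ∩ W).card := by
      intro A hA
      obtain ⟨hAs, hAc⟩ := mem_powersetCard.mp hA
      have hAR : A \ R = A ∩ W := by
        ext x
        simp only [mem_sdiff, mem_inter]
        constructor
        · rintro ⟨hxA, hxR⟩
          rcases mem_union.mp (hAs hxA) with hh | hh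
          · exact absurd hh hxR
          · exact ⟨hxA, hh⟩
        · rintro ⟨hxA, hxW⟩
          exact ⟨hxA, fun hxR => (disjoint_left.mp hdisj hxR hxW)⟩
      rw [hν]
      simp only [hAR]
      rw [if_pos inter_subset_right]
    rw [e1, Finset.sum_congr rfl e2, sum_powersetCard_split R W hdisj k d, hWc]
  set Wgood := (s.powersetCard k).filter (fun W => NB k P (R ∪ W)) with hWg
  set filterP := (C.powersetCard k).filter P with hfP
  have colGood : ∀ W ∈ Wgood, ∑ A ∈ filterP, ν A W = V := by
    intro W hW
    obtain ⟨hWmem, hWNB⟩ := mem_filter.mp hW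
    rw [hfP, Finset.sum_filter_of_ne, col W hWmem]
    intro A hA hne
    by_cases hsub : A \ R ⊆ W
    · exact hWNB A (mem_powersetCard.mpr ⟨subRW A hA W hsub, (mem_powersetCard.mp hA).2⟩)
    · rw [hν] at hne
      simp only at hne
      rw [if_neg hsub] at hne
      exact absurd rfl hne
  have key1 : Wgood.card * V ≤ filterP.card * D := by
    calc Wgood.card * V = ∑ _W ∈ Wgood, V := by rw [Finset.sum_const, smul_eq_mul]
      _ = ∑ W ∈ Wgood, ∑ A ∈ filterP, ν A W := (Finset.sum_congr rfl colGood).symm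
      _ ≤ ∑ W ∈ s.powersetCard k, ∑ A ∈ filterP, ν A W := by
          apply Finset.sum_le_sum_of_subset (filter_subset _ _)
      _ = ∑ A ∈ filterP, ∑ W ∈ s.powersetCard k, ν A W := Finset.sum_comm
      _ = ∑ A ∈ filterP, D :=
          Finset.sum_congr rfl (fun A hA => row A (mem_of_mem_filter A hA))
      _ = filterP.card * D := by rw [Finset.sum_const, smul_eq_mul]
  have key2 : (s.powersetCard k).card * V = (C.powersetCard k).card * D := by
    calc (s.powersetCard k).card * V = ∑ _W ∈ s.powersetCard k, V := by
          rw [Finset.sum_const, smul_eq_mul]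
      _ = ∑ W ∈ s.powersetCard k, ∑ A ∈ C.powersetCard k, ν A W :=
          (Finset.sum_congr rfl col).symm
      _ = ∑ A ∈ C.powersetCard k, ∑ W ∈ s.powersetCard k, ν A W := Finset.sum_comm
      _ = ∑ _A ∈ C.powersetCard k, D := Finset.sum_congr rfl row
      _ = (C.powersetCard k).card * D := by rw [Finset.sum_const, smul_eq_mul]
  have hD0 : 0 < D := Nat.pos_of_ne_zero (fun h0 =>
    absurd (Nat.descFactorial_eq_zero_iff_lt.mp h0) (by omega))
  have final : Wgood.card * (C.powersetCard k).card * D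
      ≤ filterP.card * (s.powersetCard k).card * D := by
    calc Wgood.card * (C.powersetCard k).card * D
        = Wgood.card * ((C.powersetCard k).card * D) := by ring
      _ = Wgood.card * ((s.powersetCard k).card * V) := by rw [key2]
      _ = (Wgood.card * V) * (s.powersetCard k).card := by ring
      _ ≤ (filterP.card * D) * (s.powersetCard k).card :=
          Nat.mul_le_mul_right _ key1
      _ = filterP.card * (s.powersetCard k).card * D := by ring
  exact Nat.le_of_mul_le_mul_right final hD0

lemma chain_lemma (C : Finset α) : ∀ j : ℕ, j * k ≤ C.card →
    ((C.powersetCard (j * k)).filter (NB k P)).card * ((C.powersetCard k).card) ^ j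
      ≤ (((C.powersetCard k).filter P).card) ^ j * C.card.choose (j * k) := by
  intro j
  induction j with
  | zero =>
    intro _
    simp only [Nat.zero_mul, pow_zero, Nat.mul_one, Nat.one_mul, Nat.choose_zero_right]
    calc ((C.powersetCard 0).filter (NB k P)).card
        ≤ (C.powersetCard 0).card := card_filter_le _ _
      _ = 1 := by rw [card_powersetCard, Nat.choose_zero_right]
  | succ j ih =>
    intro hj1
    have hsm : (j + 1) * k = j * k + k := by ring
    have hjk : j * k ≤ C.card := by omega
    have ihh := ih hjk
    set A1 := (C.powersetCard ((j + 1) * k)).filter (NB k P) with hA1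
    set A0 := (C.powersetCard (j * k)).filter (NB k P) with hA0
    set Ck := (C.powersetCard k).card with hCk
    set gd := ((C.powersetCard k).filter P).card with hgd
    set P1 := A1.sigma (fun T => T.powersetCard k) with hP1
    set P2 := A0.sigma
      (fun R => ((C \ R).powersetCard k).filter (fun W => NB k P (R ∪ W))) with hP2
    have cardP1 : P1.card = A1.card * ((j + 1) * k).choose k := by
      rw [hP1, Finset.card_sigma]
      calc ∑ T ∈ A1, (T.powersetCard k).card
          = ∑ _T ∈ A1, ((j + 1) * k).choose k := Finset.sum_congr rfl (fun T hT => by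
            rw [card_powersetCard, (mem_powersetCard.mp (mem_of_mem_filter T hT)).2])
        _ = A1.card * ((j + 1) * k).choose k := by rw [Finset.sum_const, smul_eq_mul]
    have hinj : P1.card ≤ P2.card := by
      apply Finset.card_le_card_of_injOn (fun p => ⟨p.1 \ p.2, p.2⟩)
      · intro p hp
        rw [hP1, Finset.mem_coe, Finset.mem_sigma] at hp
        obtain ⟨hp1, hp2⟩ := hp
        obtain ⟨hp1s, hp1NB⟩ := mem_filter.mp hp1
        obtain ⟨hp1C, hp1c⟩ := mem_powersetCard.mp hp1s
        obtain ⟨hp2s, hp2c⟩ := mem_powersetCard.mp hp2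
        have hRC : p.1 \ p.2 ⊆ C := (sdiff_subset).trans hp1C
        have hRc : (p.1 \ p.2).card = j * k := by
          rw [card_sdiff_of_subset hp2s, hp1c, hp2c]; omega
        have hTeq : (p.1 \ p.2) ∪ p.2 = p.1 := sdiff_union_of_subset hp2s
        rw [hP2, Finset.mem_coe, Finset.mem_sigma]
        constructor
        · exact mem_filter.mpr ⟨mem_powersetCard.mpr ⟨hRC, hRc⟩, NB_anti sdiff_subset hp1NB⟩
        · refine mem_filter.mpr ⟨mem_powersetCard.mpr ⟨?_, hp2c⟩, ?_⟩
          · intro x hx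
            exact mem_sdiff.mpr ⟨hp1C (hp2s hx), fun hc => (mem_sdiff.mp hc).2 hx⟩
          · rw [hTeq]; exact hp1NB
      · intro p hp q hq heq
        simp only [Sigma.mk.inj_iff] at heq
        obtain ⟨h1, h2⟩ := heq
        have h2' : p.2 = q.2 := eq_of_heq h2
        rw [hP1, Finset.mem_coe, Finset.mem_sigma] at hp hq
        have hp2s := (mem_powersetCard.mp hp.2).1
        have hq2s := (mem_powersetCard.mp hq.2).1
        have : p.1 = q.1 := by
          rw [← sdiff_union_of_subset hp2s, ← sdiff_union_of_subset hq2s, h2', ← h2']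
          rw [h1, h2']
        exact Sigma.ext this h2
    have cardP2 : P2.card
        = ∑ R ∈ A0, (((C \ R).powersetCard k).filter (fun W => NB k P (R ∪ W))).card := by
      rw [hP2, Finset.card_sigma]
    have hstep : ∀ R ∈ A0,
        (((C \ R).powersetCard k).filter (fun W => NB k P (R ∪ W))).card * Ck
          ≤ gd * ((C.card - j * k).choose k) := by
      intro R hR
      obtain ⟨hRC, hRc⟩ := mem_powersetCard.mp (mem_of_mem_filter R hR)
      have := step_lemma k P C R hRC (by omega)
      rwa [card_powersetCard (n := k) (s := C \ R), card_sdiff_of_subset hRC, hRc] at this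
    have hkey : A1.card * ((j + 1) * k).choose k * Ck
        ≤ A0.card * (gd * ((C.card - j * k).choose k)) := by
      calc A1.card * ((j + 1) * k).choose k * Ck = P1.card * Ck := by rw [cardP1]
        _ ≤ P2.card * Ck := Nat.mul_le_mul_right _ hinj
        _ = ∑ R ∈ A0,
            (((C \ R).powersetCard k).filter (fun W => NB k P (R ∪ W))).card * Ck := by
            rw [cardP2, Finset.sum_mul]
        _ ≤ ∑ _R ∈ A0, gd * ((C.card - j * k).choose k) := Finset.sum_le_sum hstep
        _ = A0.card * (gd * ((C.card - j * k).choose k)) := by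
            rw [Finset.sum_const, smul_eq_mul]
    have hid : C.card.choose (j * k) * (C.card - j * k).choose k
        = C.card.choose ((j + 1) * k) * ((j + 1) * k).choose k := by
      have h1 := Nat.choose_mul (n := C.card) (k := (j + 1) * k) (s := j * k) (by omega)
      have h2 : ((j + 1) * k).choose (j * k) = ((j + 1) * k).choose k :=
        Nat.choose_symm_of_eq_add (by omega)
      have h3 : (j + 1) * k - j * k = k := by omega
      rw [h2, h3] at h1
      omega
    have hpos : 0 < ((j + 1) * k).choose k :=
      Nat.choose_pos (by omega)
    have final : A1.card * Ck ^ (j + 1) * ((j + 1) * k).choose k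
        ≤ gd ^ (j + 1) * C.card.choose ((j + 1) * k) * ((j + 1) * k).choose k := by
      calc A1.card * Ck ^ (j + 1) * ((j + 1) * k).choose k
          = (A1.card * ((j + 1) * k).choose k * Ck) * Ck ^ j := by ring
        _ ≤ (A0.card * (gd * ((C.card - j * k).choose k))) * Ck ^ j :=
            Nat.mul_le_mul_right _ hkey
        _ = (A0.card * Ck ^ j) * gd * ((C.card - j * k).choose k) := by ring
        _ ≤ (gd ^ j * C.card.choose (j * k)) * gd * ((C.card - j * k).choose k) := by
            exact Nat.mul_le_mul_right _ (Nat.mul_le_mul_right _ ihh)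
        _ = gd ^ (j + 1) * (C.card.choose (j * k) * ((C.card - j * k).choose k)) := by ring
        _ = gd ^ (j + 1) * C.card.choose ((j + 1) * k) * ((j + 1) * k).choose k := by
            rw [hid, ← Nat.mul_assoc]
    exact Nat.le_of_mul_le_mul_right
      (by calc A1.card * Ck ^ (j + 1) * ((j + 1) * k).choose k
            ≤ gd ^ (j + 1) * C.card.choose ((j + 1) * k) * ((j + 1) * k).choose k := final) hpos

lemma reduction_lemma (C : Finset α) (m n : ℕ) (h : m * k ≤ n) (hn : n ≤ C.card) :
    ((C.powersetCard n).filter (NB k P)).card * n.choose (m * k)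
      ≤ ((C.powersetCard (m * k)).filter (NB k P)).card
          * (C.card - m * k).choose (n - m * k) := by
  set A1 := (C.powersetCard n).filter (NB k P) with hA1
  set A0 := (C.powersetCard (m * k)).filter (NB k P) with hA0
  set P1 := A1.sigma (fun T => T.powersetCard (m * k)) with hP1
  set P2 := A0.sigma (fun R => (C \ R).powersetCard (n - m * k)) with hP2
  have cardP1 : P1.card = A1.card * n.choose (m * k) := by
    rw [hP1, Finset.card_sigma]
    calc ∑ T ∈ A1, (T.powersetCard (m * k)).card
        = ∑ _T ∈ A1, n.choose (m * k) := Finset.sum_congr rfl (fun T hT => by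
          rw [card_powersetCard, (mem_powersetCard.mp (mem_of_mem_filter T hT)).2])
      _ = A1.card * n.choose (m * k) := by rw [Finset.sum_const, smul_eq_mul]
  have cardP2 : P2.card = A0.card * (C.card - m * k).choose (n - m * k) := by
    rw [hP2, Finset.card_sigma]
    calc ∑ R ∈ A0, ((C \ R).powersetCard (n - m * k)).card
        = ∑ R ∈ A0, (C.card - m * k).choose (n - m * k) :=
          Finset.sum_congr rfl (fun R hR => by
            rw [card_powersetCard,
              card_sdiff_of_subset (mem_powersetCard.mp (mem_of_mem_filter R hR)).1,
              (mem_powersetCard.mp (mem_of_mem_filter R hR)).2])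
      _ = A0.card * (C.card - m * k).choose (n - m * k) := by
          rw [Finset.sum_const, smul_eq_mul]
  have hinj : P1.card ≤ P2.card := by
    apply Finset.card_le_card_of_injOn (fun p => ⟨p.2, p.1 \ p.2⟩)
    · intro p hp
      rw [hP1, Finset.mem_coe, Finset.mem_sigma] at hp
      obtain ⟨hp1, hp2⟩ := hp
      obtain ⟨hp1s, hp1NB⟩ := mem_filter.mp hp1
      obtain ⟨hp1C, hp1c⟩ := mem_powersetCard.mp hp1s
      obtain ⟨hp2s, hp2c⟩ := mem_powersetCard.mp hp2
      rw [hP2, Finset.mem_coe, Finset.mem_sigma]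
      constructor
      · exact mem_filter.mpr ⟨mem_powersetCard.mpr ⟨hp2s.trans hp1C, hp2c⟩,
          NB_anti hp2s hp1NB⟩
      · refine mem_powersetCard.mpr ⟨sdiff_subset_sdiff hp1C Subset.rfl, ?_⟩
        rw [card_sdiff_of_subset hp2s, hp1c, hp2c]
    · intro p hp q hq heq
      simp only [Sigma.mk.inj_iff] at heq
      obtain ⟨h1, h2⟩ := heq
      have h2' : p.1 \ p.2 = q.1 \ q.2 := eq_of_heq h2
      rw [hP1, Finset.mem_coe, Finset.mem_sigma] at hp hq
      have hp2s := (mem_powersetCard.mp hp.2).1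
      have hq2s := (mem_powersetCard.mp hq.2).1
      have hfst : p.1 = q.1 := by
        rw [← sdiff_union_of_subset hp2s, ← sdiff_union_of_subset hq2s, h2', h1]
      refine Sigma.ext hfst (heq_of_eq ?_)
      exact h1
  rw [← cardP1, ← cardP2]
  exact hinj

end Aux


section RealPart
variable {α : Type*} [DecidableEq α]

lemma sum_eq_card_filter (s : Finset (Finset α)) (f : Finset α → ℝ)
    (hf : ∀ S, f S = 0 ∨ f S = 1) [DecidablePred (fun S : Finset α => f S = 1)] :
    ∑ S ∈ s, f S = ((s.filter (fun S => f S = 1)).card : ℝ) := by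
  rw [← Finset.sum_filter_add_sum_filter_not s (fun S => f S = 1)]
  have h1 : ∑ S ∈ s.filter (fun S => f S = 1), f S
      = ((s.filter (fun S => f S = 1)).card : ℝ) := by
    rw [Finset.sum_congr rfl (fun S hS => (Finset.mem_filter.mp hS).2),
      Finset.sum_const, nsmul_eq_mul, mul_one]
  have h2 : ∑ S ∈ s.filter (fun S => ¬ f S = 1), f S = 0 := by
    apply Finset.sum_eq_zero
    intro S hS
    rcases hf S with h | h
    · exact h
    · exact absurd h (Finset.mem_filter.mp hS).2
  rw [h1, h2, add_zero]

lemma NB_of_avg_one {k : ℕ} {f : Finset α → ℝ} (hf : ∀ S, f S = 0 ∨ f S = 1)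
    {T : Finset α} (hkT : k ≤ T.card) (havg : avgk k f T = 1) :
    NB k (fun S => f S = 1) T := by
  have hpos : (0 : ℝ) < (T.card.choose k : ℝ) := by
    exact_mod_cast Nat.choose_pos hkT
  have hsum : ∑ S ∈ T.powersetCard k, f S = (T.card.choose k : ℝ) := by
    have := havg
    rw [avgk, div_eq_one_iff_eq (ne_of_gt hpos)] at this
    exact this
  intro S hS
  by_contra hne
  have hS0 : f S < 1 := by
    rcases hf S with h | h
    · rw [h]; norm_num
    · exact absurd h hne
  have hlt : ∑ S ∈ T.powersetCard k, f S < ∑ _S ∈ T.powersetCard k, (1 : ℝ) :=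
    Finset.sum_lt_sum (fun i _ => by rcases hf i with h | h <;> rw [h] <;> norm_num)
      ⟨S, hS, hS0⟩
  rw [Finset.sum_const, nsmul_eq_mul, mul_one, Finset.card_powersetCard] at hlt
  rw [hsum] at hlt
  exact lt_irrefl _ hlt

lemma single_bound (C : Finset α) (k n : ℕ) (hk : 1 ≤ k) (hkn : k ≤ n) (hnN : n ≤ C.card)
    (f : Finset α → ℝ) (hf : ∀ S, f S = 0 ∨ f S = 1) (ε : ℝ) (hε1 : ε ≤ 1)
    (hA : avgk k f C ≤ 1 - ε) [DecidablePred (fun S : Finset α => f S = 1)] :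
    (((C.powersetCard n).filter (fun Υ => avgk k f Υ = 1)).card : ℝ)
      ≤ Real.exp (-(((n / k : ℕ) : ℝ) * ε)) * ((C.powersetCard n).card : ℝ) := by
  set P : Finset α → Prop := fun S => f S = 1 with hP
  set m := n / k with hm
  set N := C.card with hN
  have hmkn : m * k ≤ n := Nat.div_mul_le_self n k
  have hkN : k ≤ N := hkn.trans hnN
  -- avg=1 implies NB
  have hsub : (C.powersetCard n).filter (fun Υ => avgk k f Υ = 1)
      ⊆ (C.powersetCard n).filter (NB k P) := by
    intro Υ hΥ
    obtain ⟨hmem, havg⟩ := Finset.mem_filter.mp hΥ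
    refine Finset.mem_filter.mpr ⟨hmem, ?_⟩
    exact NB_of_avg_one hf (by rw [(Finset.mem_powersetCard.mp hmem).2]; exact hkn) havg
  set aN := ((C.powersetCard n).filter (NB k P)).card with haN
  set aM := ((C.powersetCard (m * k)).filter (NB k P)).card with haM
  set gd := ((C.powersetCard k).filter P).card with hgd
  have hred := reduction_lemma k P C m n hmkn hnN
  have hch := chain_lemma k P C m (hmkn.trans hnN)
  rw [Finset.card_powersetCard] at hch ⊢
  -- combine in ℕ : aN * n.choose (m*k) * (N.choose k)^m ≤ gd^m * (N.choose (m*k) * (N-m*k).choose (n-m*k))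
  have hNat : aN * n.choose (m * k) * (N.choose k) ^ m
      ≤ gd ^ m * (N.choose (m * k) * (N - m * k).choose (n - m * k)) := by
    calc aN * n.choose (m * k) * (N.choose k) ^ m
        ≤ (aM * (N - m * k).choose (n - m * k)) * (N.choose k) ^ m :=
          Nat.mul_le_mul_right _ hred
      _ = (aM * (N.choose k) ^ m) * (N - m * k).choose (n - m * k) := by ring
      _ ≤ (gd ^ m * N.choose (m * k)) * (N - m * k).choose (n - m * k) :=
          Nat.mul_le_mul_right _ hch
      _ = gd ^ m * (N.choose (m * k) * (N - m * k).choose (n - m * k)) := by ring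
  have hid : N.choose (m * k) * (N - m * k).choose (n - m * k)
      = N.choose n * n.choose (m * k) := by
    exact (Nat.choose_mul (n := N) (k := n) (s := m * k) hmkn).symm
  rw [hid] at hNat
  have hpos : 0 < n.choose (m * k) := Nat.choose_pos hmkn
  have hNat2 : aN * (N.choose k) ^ m ≤ gd ^ m * N.choose n := by
    apply Nat.le_of_mul_le_mul_right _ hpos
    calc aN * (N.choose k) ^ m * n.choose (m * k)
        = aN * n.choose (m * k) * (N.choose k) ^ m := by ring
      _ ≤ gd ^ m * (N.choose n * n.choose (m * k)) := hNat
      _ = gd ^ m * N.choose n * n.choose (m * k) := by ring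
  -- to ℝ
  have hCk : (0 : ℝ) < (N.choose k : ℝ) := by exact_mod_cast Nat.choose_pos hkN
  have hreal : (aN : ℝ) ≤ ((gd : ℝ) / (N.choose k : ℝ)) ^ m * (N.choose n : ℝ) := by
    rw [div_pow, div_mul_eq_mul_div, le_div_iff₀ (by positivity)]
    calc (aN : ℝ) * ((N.choose k : ℝ)) ^ m = ((aN * (N.choose k) ^ m : ℕ) : ℝ) := by
          push_cast; ring
      _ ≤ ((gd ^ m * N.choose n : ℕ) : ℝ) := by exact_mod_cast hNat2
      _ = (gd : ℝ) ^ m * (N.choose n : ℝ) := by push_cast; ring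
  have hgd1 : (gd : ℝ) / (N.choose k : ℝ) ≤ 1 - ε := by
    rw [div_le_iff₀ hCk]
    have : avgk k f C = (gd : ℝ) / (N.choose k : ℝ) := by
      rw [avgk, sum_eq_card_filter _ f hf]
    rw [this, div_le_iff₀ hCk] at hA
    exact hA
  have hgd0 : (0 : ℝ) ≤ (gd : ℝ) / (N.choose k : ℝ) := by positivity
  have hε0' : (0 : ℝ) ≤ 1 - ε := by linarith
  have hexp : ((gd : ℝ) / (N.choose k : ℝ)) ^ m ≤ Real.exp (-((m : ℝ) * ε)) := by
    calc ((gd : ℝ) / (N.choose k : ℝ)) ^ m ≤ (1 - ε) ^ m := pow_le_pow_left₀ hgd0 hgd1 m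
      _ ≤ (Real.exp (-ε)) ^ m := by
          apply pow_le_pow_left₀ hε0'
          have := Real.add_one_le_exp (-ε)
          linarith
      _ = Real.exp (-((m : ℝ) * ε)) := by
          rw [← Real.exp_nat_mul]
          ring_nf
  calc (((C.powersetCard n).filter (fun Υ => avgk k f Υ = 1)).card : ℝ)
      ≤ (aN : ℝ) := by exact_mod_cast Finset.card_le_card hsub
    _ ≤ ((gd : ℝ) / (N.choose k : ℝ)) ^ m * (N.choose n : ℝ) := hreal
    _ ≤ Real.exp (-((m : ℝ) * ε)) * (N.choose n : ℝ) := by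
        apply mul_le_mul_of_nonneg_right hexp (by positivity)

end RealPart

/-- Uniform-over-class realizable-case bound: the probability (over the
uniform draw of the size-`n` subset `Υ` of `C`) that some `Φ ∈ H` has
empirical probability `Â(f_Φ,Υ) = 1` while its true probability satisfies
`A(f_Φ) ≤ 1 − ε` is at most `|H|·exp(−⌊n/k⌋·ε)`. -/
theorem stmt_14 {α β : Type*} (C : Finset α) (N k n : ℕ)
    (hN : C.card = N) (hk : 1 ≤ k) (hkn : k ≤ n) (hnN : n ≤ N)
    (H : Finset β) (hH : H.Nonempty)
    (f : β → Finset α → ℝ) (hf : ∀ Φ S, f Φ S = 0 ∨ f Φ S = 1)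
    (ε : ℝ) (hε : ε ∈ Set.Ioc (0 : ℝ) 1) :
    prFrac (C.powersetCard n)
        (fun Υ => ∃ Φ ∈ H, avgk k (f Φ) Υ = 1 ∧ avgk k (f Φ) C ≤ 1 - ε)
      ≤ (H.card : ℝ) * Real.exp (-(((n / k : ℕ) : ℝ) * ε)) := by
  classical
  obtain ⟨hε0, hε1⟩ := hε
  have hnC : n ≤ C.card := by omega
  have hNn : (0 : ℝ) < ((C.powersetCard n).card : ℝ) := by
    rw [Finset.card_powersetCard]
    exact_mod_cast Nat.choose_pos hnC
  rw [prFrac, Finset.filter_congr_decidable, div_le_iff₀ hNn]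
  have hper : ∀ Φ ∈ H,
      (((C.powersetCard n).filter
          (fun Υ => avgk k (f Φ) Υ = 1 ∧ avgk k (f Φ) C ≤ 1 - ε)).card : ℝ)
        ≤ Real.exp (-(((n / k : ℕ) : ℝ) * ε)) * ((C.powersetCard n).card : ℝ) := by
    intro Φ _
    by_cases hc : avgk k (f Φ) C ≤ 1 - ε
    · have hsub : (C.powersetCard n).filter
          (fun Υ => avgk k (f Φ) Υ = 1 ∧ avgk k (f Φ) C ≤ 1 - ε)
          ⊆ (C.powersetCard n).filter (fun Υ => avgk k (f Φ) Υ = 1) := by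
        intro Υ hΥ
        obtain ⟨hmem, hpred⟩ := Finset.mem_filter.mp hΥ
        exact Finset.mem_filter.mpr ⟨hmem, hpred.1⟩
      calc (((C.powersetCard n).filter
            (fun Υ => avgk k (f Φ) Υ = 1 ∧ avgk k (f Φ) C ≤ 1 - ε)).card : ℝ)
          ≤ (((C.powersetCard n).filter (fun Υ => avgk k (f Φ) Υ = 1)).card : ℝ) := by
            exact_mod_cast Finset.card_le_card hsub
        _ ≤ Real.exp (-(((n / k : ℕ) : ℝ) * ε)) * ((C.powersetCard n).card : ℝ) :=
            single_bound C k n hk hkn hnC (f Φ) (hf Φ) ε hε1 hc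
    · have hempt : (C.powersetCard n).filter
          (fun Υ => avgk k (f Φ) Υ = 1 ∧ avgk k (f Φ) C ≤ 1 - ε) = ∅ := by
        apply Finset.filter_false_of_mem
        intro Υ _ hpred
        exact hc hpred.2
      rw [hempt]
      simp only [Finset.card_empty, Nat.cast_zero]
      positivity
  have hsub2 : ((C.powersetCard n).filter
        (fun Υ => ∃ Φ ∈ H, avgk k (f Φ) Υ = 1 ∧ avgk k (f Φ) C ≤ 1 - ε))
      ⊆ H.biUnion (fun Φ => (C.powersetCard n).filter
          (fun Υ => avgk k (f Φ) Υ = 1 ∧ avgk k (f Φ) C ≤ 1 - ε)) := by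
    intro Υ hΥ
    rw [Finset.mem_filter] at hΥ
    obtain ⟨hmem, Φ, hΦH, hpred⟩ := hΥ
    exact Finset.mem_biUnion.mpr ⟨Φ, hΦH, Finset.mem_filter.mpr ⟨hmem, hpred⟩⟩
  calc (((C.powersetCard n).filter
        (fun Υ => ∃ Φ ∈ H, avgk k (f Φ) Υ = 1 ∧ avgk k (f Φ) C ≤ 1 - ε)).card : ℝ)
      ≤ ((H.biUnion (fun Φ => (C.powersetCard n).filter
          (fun Υ => avgk k (f Φ) Υ = 1 ∧ avgk k (f Φ) C ≤ 1 - ε))).card : ℝ) := by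
        exact_mod_cast Finset.card_le_card hsub2
    _ ≤ ∑ Φ ∈ H, (((C.powersetCard n).filter
          (fun Υ => avgk k (f Φ) Υ = 1 ∧ avgk k (f Φ) C ≤ 1 - ε)).card : ℝ) := by
        exact_mod_cast Finset.card_biUnion_le
    _ ≤ ∑ _Φ ∈ H, Real.exp (-(((n / k : ℕ) : ℝ) * ε)) * ((C.powersetCard n).card : ℝ) :=
        Finset.sum_le_sum hper
    _ = (H.card : ℝ) * Real.exp (-(((n / k : ℕ) : ℝ) * ε)) * ((C.powersetCard n).card : ℝ) := by
        rw [Finset.sum_const, nsmul_eq_mul]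
        ring
end
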